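/- arXiv:2009.09340 — 9 statements merged into one kernel-verified Lean document; each statement's English description precedes it below -/
import Mathlib

section
/- Let n and k be positive integers and let e = gcd(k, n). Then gcd(2^k + 1, 2^n − 1) = 1 if n/e is odd, and gcd(2^k + 1, 2^n − 1) = 2^e + 1 if n/e is even. -/
/-!
Write `e = gcd k n`. Any common divisor of `2^k + 1` and `2^n - 1` divides
`(2^k + 1)(2^k - 1) = 2^(2k) - 1`, hence `2^gcd(2k, n) - 1`, and `gcd(2k, n)` is `e` or `2e`
according as `n/e` is odd or even. Since `2^k + 1` is coprime to `2^k - 1`, and so to its divisor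
`2^e - 1`, the gcd is `1` in the odd case and divides `2^e + 1` in the even case. In the even case
`k/e` is odd, so conversely `2^e + 1` divides `2^k + 1` and `2^(2e) - 1 ∣ 2^n - 1`.
-/

namespace Nat

lemma pow_add_one_mul_pow_sub_one (a m : ℕ) : (a ^ m + 1) * (a ^ m - 1) = a ^ (2 * m) - 1 := by
  rw [← Nat.sq_sub_sq, one_pow, ← pow_mul, mul_comm]

lemma coprime_two_pow_add_one_two_pow_sub_one {m : ℕ} (hm : m ≠ 0) :
    Coprime (2 ^ m + 1) (2 ^ m - 1) := by
  have hodd : Odd (2 ^ m - 1) :=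
    Nat.Even.sub_odd Nat.one_le_two_pow (Nat.even_pow.2 ⟨even_two, hm⟩) odd_one
  have hsplit : 2 ^ m + 1 = 2 + (2 ^ m - 1) := by
    have := Nat.one_le_two_pow (n := m)
    omega
  rwa [hsplit, coprime_add_self_left, coprime_two_left]

lemma gcd_mul_left_eq_gcd_mul_gcd_div (m k n : ℕ) :
    gcd (m * k) n = gcd k n * gcd m (n / gcd k n) := by
  rcases Nat.eq_zero_or_pos (gcd k n) with h | h
  · simp [Nat.gcd_eq_zero_iff.1 h]
  calc gcd (m * k) n
      = gcd (gcd k n * (m * (k / gcd k n))) (gcd k n * (n / gcd k n)) := by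
        rw [mul_left_comm, Nat.mul_div_cancel' (gcd_dvd_left k n),
          Nat.mul_div_cancel' (gcd_dvd_right k n)]
    _ = gcd k n * gcd m (n / gcd k n) := by
        rw [gcd_mul_left, (coprime_div_gcd_div_gcd h).gcd_mul_right_cancel]

lemma gcd_pow_add_one_pow_sub_one_dvd (a k n : ℕ) :
    gcd (a ^ k + 1) (a ^ n - 1) ∣ a ^ (gcd k n * gcd 2 (n / gcd k n)) - 1 := by
  rw [← gcd_mul_left_eq_gcd_mul_gcd_div, ← pow_sub_one_gcd_pow_sub_one,
    ← pow_add_one_mul_pow_sub_one]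
  exact gcd_dvd_gcd_of_dvd_left _ (dvd_mul_right _ _)

lemma pow_add_one_dvd_pow_add_one {a d k : ℕ} (hdk : d ∣ k) (hodd : Odd (k / d)) :
    a ^ d + 1 ∣ a ^ k + 1 := by
  simpa [← pow_mul, Nat.mul_div_cancel' hdk] using hodd.nat_add_dvd_pow_add_pow (a ^ d) 1

lemma pow_add_one_dvd_pow_sub_one {a d n : ℕ} (hdn : 2 * d ∣ n) : a ^ d + 1 ∣ a ^ n - 1 :=
  (Dvd.intro _ (pow_add_one_mul_pow_sub_one a d)).trans (pow_sub_one_dvd_pow_sub_one a hdn)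

end Nat

theorem gcd_two_pow_add_one_two_pow_sub_one_general (n k : ℕ) (hk : 0 < k) :
    (Odd (n / Nat.gcd k n) → Nat.gcd (2 ^ k + 1) (2 ^ n - 1) = 1) ∧
    (Even (n / Nat.gcd k n) → Nat.gcd (2 ^ k + 1) (2 ^ n - 1) = 2 ^ Nat.gcd k n + 1) := by
  have hdvd := Nat.gcd_pow_add_one_pow_sub_one_dvd 2 k n
  have hcop : Nat.Coprime (2 ^ k + 1) (2 ^ Nat.gcd k n - 1) :=
    (Nat.coprime_two_pow_add_one_two_pow_sub_one hk.ne').coprime_dvd_right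
      (Nat.pow_sub_one_dvd_pow_sub_one 2 (Nat.gcd_dvd_left k n))
  refine ⟨fun hodd => ?_, fun heven => ?_⟩
  · rw [(Nat.coprime_two_left.2 hodd).gcd_eq_one, mul_one] at hdvd
    exact Nat.eq_one_of_dvd_coprimes hcop (Nat.gcd_dvd_left _ _) hdvd
  · have htwo : 2 ∣ n / Nat.gcd k n := even_iff_two_dvd.1 heven
    rw [Nat.gcd_eq_left htwo, mul_comm, ← Nat.pow_add_one_mul_pow_sub_one] at hdvd
    have hkodd : Odd (k / Nat.gcd k n) := Nat.coprime_two_right.1 <|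
      (Nat.coprime_div_gcd_div_gcd (Nat.gcd_pos_of_pos_left n hk)).coprime_dvd_right htwo
    apply dvd_antisymm
    · exact (hcop.coprime_dvd_left (Nat.gcd_dvd_left _ _)).dvd_of_dvd_mul_right hdvd
    · exact Nat.dvd_gcd (Nat.pow_add_one_dvd_pow_add_one (Nat.gcd_dvd_left k n) hkodd)
        (Nat.pow_add_one_dvd_pow_sub_one
          (mul_comm 2 (Nat.gcd k n) ▸ Nat.mul_dvd_of_dvd_div (Nat.gcd_dvd_right k n) htwo))

/-- Gold exponent gcd lemma: with `e = gcd(k, n)`,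
`gcd(2^k + 1, 2^n − 1) = 1` if `n/e` is odd, and `= 2^e + 1` if `n/e` is even. -/
theorem gcd_two_pow_add_one_two_pow_sub_one (n k : ℕ) (hn : 0 < n) (hk : 0 < k) :
    (Odd (n / Nat.gcd k n) → Nat.gcd (2 ^ k + 1) (2 ^ n - 1) = 1) ∧
    (Even (n / Nat.gcd k n) → Nat.gcd (2 ^ k + 1) (2 ^ n - 1) = 2 ^ Nat.gcd k n + 1) :=
  gcd_two_pow_add_one_two_pow_sub_one_general n k hk
end

section
/- Let n, k be positive integers with 1 ≤ k < n and e = gcd(k, n), and suppose n/e is odd. Then for every u ∈ F_q^*, the linearized polynomial L_u(x) = u^{2^k}·x^{2^{2k}} + u·x has exactly 2^e roots x in F_q. -/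
/-! A nonzero `x` is a root iff `x ^ m = (u ^ (2 ^ k - 1))⁻¹`, where `m = 2 ^ (2k) - 1`. In the
cyclic group `F_q^*` of order `q - 1 = 2 ^ n - 1`, the nonempty fibres of `x ↦ x ^ m` have
`gcd(m, q - 1)` elements and every `gcd(m, q - 1)`-th power lies in the image. Here
`gcd(m, q - 1) = 2 ^ gcd(2k, n) - 1 = 2 ^ e - 1` because `n / e` is odd, and `2 ^ e - 1` divides
`2 ^ k - 1`, so there are exactly `2 ^ e - 1` nonzero roots. -/

open Finset Polynomial

theorem Nat.gcd_two_mul_of_odd_div_gcd {k n : ℕ} (h : Odd (n / gcd k n)) :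
    gcd (2 * k) n = gcd k n := by
  rcases (gcd k n).eq_zero_or_pos with h0 | hpos
  · obtain ⟨rfl, rfl⟩ := Nat.gcd_eq_zero_iff.mp h0
    rfl
  obtain ⟨g, k', n', hg, hcop, rfl, rfl⟩ := Nat.exists_coprime' hpos
  rw [Nat.gcd_mul_right, hcop.gcd_eq_one, one_mul] at h ⊢
  rw [Nat.mul_div_cancel _ hg] at h
  rw [← mul_assoc, Nat.gcd_mul_right, hcop.gcd_mul_right_cancel, Nat.coprime_two_left.mpr h,
    one_mul]

theorem IsPrimitiveRoot.card_nthRootsFinset_pow {R : Type*} [CommRing R] [IsDomain R]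
    {ζ α : R} {n : ℕ} (h : IsPrimitiveRoot ζ n) (hα : α ≠ 0) :
    #(nthRootsFinset n (α ^ n)) = n := by
  classical
  rw [nthRootsFinset_def, Multiset.toFinset_card_of_nodup (h.nthRoots_nodup (pow_ne_zero _ hα)),
    h.card_nthRoots, if_pos ⟨α, rfl⟩]

namespace FiniteField

variable {K : Type*} [Field K] [Fintype K]

theorem exists_isPrimitiveRoot_of_dvd {d : ℕ} (hd : d ≠ 0) (hdvd : d ∣ Fintype.card K - 1) :
    ∃ ζ : K, IsPrimitiveRoot ζ d := by
  obtain ⟨g, hg⟩ := IsCyclic.exists_ofOrder_eq_natCard (α := Kˣ)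
  rw [Nat.card_units, Nat.card_eq_fintype_card] at hg
  have hg' : IsPrimitiveRoot (g : K) (Fintype.card K - 1) :=
    IsPrimitiveRoot.coe_units_iff.mpr (hg ▸ IsPrimitiveRoot.orderOf g)
  have hq : Fintype.card K - 1 ≠ 0 := Nat.sub_ne_zero_of_lt Fintype.one_lt_card
  refine ⟨g ^ ((Fintype.card K - 1) / d), ?_⟩
  simpa [Nat.div_div_self hdvd hq] using
    hg'.pow_of_dvd ((Nat.div_ne_zero_iff_of_dvd hdvd).mpr ⟨hq, hd⟩) (Nat.div_dvd_of_dvd hdvd)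

theorem pow_eq_pow_iff_pow_gcd_eq {x y : K} (hx : x ≠ 0) (hy : y ≠ 0) (m : ℕ) :
    x ^ m = y ^ m ↔
      x ^ Nat.gcd m (Fintype.card K - 1) = y ^ Nat.gcd m (Fintype.card K - 1) := by
  have hxy : (x / y) ^ (Fintype.card K - 1) = 1 :=
    pow_card_sub_one_eq_one _ (div_ne_zero hx hy)
  rw [← div_eq_one_iff_eq (pow_ne_zero _ hy), ← div_pow,
    ← div_eq_one_iff_eq (pow_ne_zero _ hy), ← div_pow, pow_gcd_eq_one]
  exact ⟨fun h => ⟨h, hxy⟩, And.left⟩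

theorem exists_pow_eq_pow_of_gcd_dvd {a : K} (ha : a ≠ 0) {m j : ℕ}
    (h : Nat.gcd m (Fintype.card K - 1) ∣ j) : ∃ b ≠ 0, b ^ m = a ^ j := by
  obtain ⟨w, rfl⟩ := h
  set q := Fintype.card K - 1
  set c := a ^ w
  have hc : c ≠ 0 := pow_ne_zero w ha
  have hq : c ^ (q : ℤ) = 1 := by rw [zpow_natCast]; exact pow_card_sub_one_eq_one c hc
  refine ⟨c ^ Nat.gcdA m q, zpow_ne_zero _ hc, ?_⟩
  rw [pow_mul', ← zpow_natCast, ← zpow_natCast, Nat.gcd_eq_gcd_ab, zpow_add₀ hc, zpow_mul c q,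
    hq, one_zpow, mul_one, ← zpow_mul, mul_comm]

theorem card_filter_pow_eq_pow [DecidableEq K] {x₀ : K} (hx₀ : x₀ ≠ 0) {m : ℕ}
    (hm : m ≠ 0) :
    #{x | x ^ m = x₀ ^ m} = Nat.gcd m (Fintype.card K - 1) := by
  set d := Nat.gcd m (Fintype.card K - 1)
  have hd : 0 < d := Nat.gcd_pos_of_pos_right _ (Nat.sub_pos_of_lt Fintype.one_lt_card)
  obtain ⟨ζ, hζ⟩ := exists_isPrimitiveRoot_of_dvd hd.ne' (Nat.gcd_dvd_right _ _)
  rw [← hζ.card_nthRootsFinset_pow hx₀]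
  congr 1
  ext x
  rw [mem_filter_univ, mem_nthRootsFinset hd]
  rcases eq_or_ne x 0 with rfl | hx
  · rw [zero_pow hm, zero_pow hd.ne']
    exact iff_of_false (pow_ne_zero m hx₀).symm (pow_ne_zero d hx₀).symm
  · exact pow_eq_pow_iff_pow_gcd_eq hx hx₀ m

end FiniteField

theorem CharTwo.pow_succ_mul_pow_succ_add_mul_eq_zero_iff {F : Type*} [Field F] [CharP F 2]
    {u x : F} (hu : u ≠ 0) (hx : x ≠ 0) (i j : ℕ) :
    u ^ (i + 1) * x ^ (j + 1) + u * x = 0 ↔ x ^ j = (u ^ i)⁻¹ := by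
  rw [CharTwo.add_eq_zero, ← mul_eq_one_iff_eq_inv₀ (pow_ne_zero _ hu)]
  exact ⟨fun h => mul_right_cancel₀ (mul_ne_zero hu hx) (by linear_combination h),
    fun h => by linear_combination (u * x) * h⟩

theorem card_roots_linearized_odd_general (n k : ℕ) (hk1 : 1 ≤ k)
    {F : Type*} [Field F] [Fintype F] [DecidableEq F] [CharP F 2]
    (hcard : Fintype.card F = 2 ^ n)
    (hodd : Odd (n / Nat.gcd k n))
    (u : F) (hu : u ≠ 0) :
    (Finset.univ.filter fun x : F =>
        u ^ (2 ^ k) * x ^ (2 ^ (2 * k)) + u * x = 0).card = 2 ^ Nat.gcd k n := by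
  set m := 2 ^ (2 * k) - 1
  have hm : m ≠ 0 := Nat.sub_ne_zero_of_lt (Nat.one_lt_two_pow (by omega))
  have hgcd : Nat.gcd m (Fintype.card F - 1) = 2 ^ Nat.gcd k n - 1 := by
    rw [hcard, Nat.pow_sub_one_gcd_pow_sub_one, Nat.gcd_two_mul_of_odd_div_gcd hodd]
  have hdvd : Nat.gcd m (Fintype.card F - 1) ∣ 2 ^ k - 1 := by
    rw [hgcd]
    exact Nat.pow_sub_one_dvd_pow_sub_one 2 (Nat.gcd_dvd_left k n)
  obtain ⟨x₀, hx₀ne, hx₀⟩ :=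
    FiniteField.exists_pow_eq_pow_of_gcd_dvd (inv_ne_zero hu) hdvd
  rw [inv_pow] at hx₀
  have hroots : (univ.filter fun x : F => u ^ (2 ^ k) * x ^ (2 ^ (2 * k)) + u * x = 0) =
      insert 0 ({x | x ^ m = x₀ ^ m} : Finset F) := by
    ext x
    rw [mem_filter_univ, mem_insert, mem_filter_univ]
    rcases eq_or_ne x 0 with rfl | hx
    · simp
    rw [← Nat.sub_add_cancel (Nat.one_le_two_pow (n := k)),
      ← Nat.sub_add_cancel (Nat.one_le_two_pow (n := 2 * k)),
      CharTwo.pow_succ_mul_pow_succ_add_mul_eq_zero_iff hu hx, ← hx₀]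
    exact (or_iff_right hx).symm
  have h0 : (0 : F) ∉ ({x | x ^ m = x₀ ^ m} : Finset F) := by
    rw [mem_filter_univ, zero_pow hm]
    exact (pow_ne_zero m hx₀ne).symm
  rw [hroots, card_insert_of_notMem h0, FiniteField.card_filter_pow_eq_pow hx₀ne hm, hgcd,
    Nat.sub_add_cancel Nat.one_le_two_pow]

/-- If `n/e` is odd (`e = gcd(k,n)`), then for every nonzero `u` in the field `F` with
`2^n` elements, the linearized polynomial `L_u(x) = u^{2^k} x^{2^{2k}} + u x`
has exactly `2^e` roots in `F`. -/
theorem card_roots_linearized_odd (n k : ℕ) (hk1 : 1 ≤ k) (hkn : k < n)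
    {F : Type*} [Field F] [Fintype F] [DecidableEq F] [CharP F 2]
    (hcard : Fintype.card F = 2 ^ n)
    (hodd : Odd (n / Nat.gcd k n))
    (u : F) (hu : u ≠ 0) :
    (Finset.univ.filter fun x : F =>
        u ^ (2 ^ k) * x ^ (2 ^ (2 * k)) + u * x = 0).card = 2 ^ Nat.gcd k n :=
  card_roots_linearized_odd_general n k hk1 hcard hodd u hu
end

section
/- Let n, k be positive integers with 1 ≤ k < n and e = gcd(k, n), and suppose n/e is even. If u ∈ F_q^* is a (2^e+1)-th power, i.e. u = w^{2^e+1} for some w ∈ F_q^*, then the linearized polynomial L_u(x) = u^{2^k}·x^{2^{2k}} + u·x has exactly 2^{2e} roots x in F_q. -/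
/-!
A nonzero root of `L_u` is a solution of `x ^ (2 ^ (2k) - 1) = u ^ (1 - 2 ^ k)`. In the cyclic
group `F_qˣ` of order `2 ^ n - 1`, an equation `x ^ m = c` with `c` a `gcd(m, 2 ^ n - 1)`-th power
has exactly `gcd(m, 2 ^ n - 1)` solutions (Bézout makes `c` an `m`-th power), and here
`gcd(2 ^ (2k) - 1, 2 ^ n - 1) = 2 ^ gcd(2k, n) - 1 = 2 ^ (2e) - 1` because `n / e` is even.
Writing `u = w ^ (2 ^ e + 1)`, `u ^ (1 - 2 ^ k) = w ^ (-(2 ^ e + 1)(2 ^ k - 1))` is such a power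
since `2 ^ e - 1 ∣ 2 ^ k - 1`. Together with `x = 0` this gives `2 ^ (2e)` roots.
-/

open Finset

theorem Nat.gcd_two_mul_of_even_div_gcd (k n : ℕ) (h : Even (n / k.gcd n)) :
    (2 * k).gcd n = 2 * k.gcd n := by
  obtain ⟨t, ht⟩ := h
  have hn : n = 2 * k.gcd n * t :=
    (Nat.mul_div_cancel' (Nat.gcd_dvd_right k n)).symm.trans (by rw [ht]; ring)
  apply Nat.dvd_antisymm
  · rw [← Nat.gcd_mul_left]
    exact Nat.gcd_dvd_gcd_of_dvd_right _ (dvd_mul_left n 2)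
  · exact Nat.dvd_gcd (mul_dvd_mul_left 2 (Nat.gcd_dvd_left k n)) ⟨t, hn⟩

theorem exists_pow_eq_pow_gcd_card {G : Type*} [Group G] [Finite G] (z : G) (m : ℕ) :
    ∃ y : G, y ^ m = z ^ m.gcd (Nat.card G) := by
  refine ⟨z ^ m.gcdA (Nat.card G), ?_⟩
  rw [← zpow_natCast, ← zpow_mul, ← zpow_natCast z, Nat.gcd_eq_gcd_ab, zpow_add, mul_comm,
    zpow_mul z (Nat.card G : ℤ), zpow_natCast z (Nat.card G), pow_card_eq_one', one_zpow, mul_one]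

theorem IsCyclic.card_pow_eq_pow {G : Type*} [CommGroup G] [IsCyclic G] [Finite G] (m : ℕ)
    (y : G) : Nat.card {x : G // x ^ m = y ^ m} = (Nat.card G).gcd m := by
  rw [← IsCyclic.card_powMonoidHom_ker]
  refine Nat.card_congr (Equiv.subtypeEquiv (Equiv.mulRight y⁻¹) fun x => ?_)
  simp [mul_pow, mul_inv_eq_one]

theorem FiniteField.card_pow_eq_pow_gcd {K : Type*} [Field K] [Finite K] {m : ℕ} (hm : m ≠ 0)
    {z : K} (hz : z ≠ 0) :
    Nat.card {x : K // x ^ m = z ^ m.gcd (Nat.card K - 1)} = m.gcd (Nat.card K - 1) := by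
  obtain ⟨y, hy⟩ := exists_pow_eq_pow_gcd_card (Units.mk0 z hz) m
  rw [Nat.card_units] at hy
  have hc : z ^ m.gcd (Nat.card K - 1) = ((y ^ m : Kˣ) : K) := by simp [hy]
  rw [hc, Nat.gcd_comm, ← Nat.card_units, ← IsCyclic.card_pow_eq_pow m y]
  have hne (x : {x : K // x ^ m = ((y ^ m : Kˣ) : K)}) : x.1 ≠ 0 := fun h =>
    (y ^ m).ne_zero (by rw [← x.2, h, zero_pow hm])
  exact Nat.card_congr
    { toFun := fun x => ⟨Units.mk0 x.1 (hne x), Units.ext (by simp [x.2])⟩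
      invFun := fun x => ⟨x.1, by rw [← Units.val_pow_eq_pow_val, x.2]⟩
      left_inv := fun x => rfl
      right_inv := fun x => Subtype.ext (Units.ext rfl) }

theorem mul_pow_succ_add_mul_eq_zero_iff {K : Type*} [Field K] {a : K} (ha : a ≠ 0) (b x : K)
    (m : ℕ) : a * x ^ (m + 1) + b * x = 0 ↔ x = 0 ∨ x ^ m = -b / a := by
  rw [pow_succ, ← mul_assoc, ← add_mul, mul_eq_zero, eq_div_iff ha, or_comm, mul_comm,
    ← eq_neg_iff_add_eq_zero]

theorem card_filter_mul_pow_succ_add_mul_eq_zero {K : Type*} [Field K] [Fintype K]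
    [DecidableEq K] {a b : K} (ha : a ≠ 0) (hb : b ≠ 0) {m : ℕ} (hm : m ≠ 0) :
    #{x | a * x ^ (m + 1) + b * x = 0} = Nat.card {x : K // x ^ m = -b / a} + 1 := by
  have h0 : (0 : K) ∉ ({x | x ^ m = -b / a} : Finset K) := by
    simp [zero_pow hm, eq_comm, ha, hb]
  rw [Nat.card_eq_fintype_card, Fintype.card_subtype, ← card_insert_of_notMem h0]
  congr 1
  ext x
  simp [mul_pow_succ_add_mul_eq_zero_iff ha]

theorem pow_div_pow_two_pow_eq_inv_pow {K : Type*} [Field K] {w : K} (hw : w ≠ 0) {e k t : ℕ}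
    (ht : 2 ^ k - 1 = (2 ^ e - 1) * t) :
    w ^ (2 ^ e + 1) / (w ^ (2 ^ e + 1)) ^ 2 ^ k = ((w ^ t)⁻¹) ^ (2 ^ (2 * e) - 1) := by
  have hk : 2 ^ k = (2 ^ e - 1) * t + 1 := by rw [← ht, Nat.sub_add_cancel Nat.one_le_two_pow]
  have h2e : 2 ^ (2 * e) - 1 = (2 ^ e + 1) * (2 ^ e - 1) := by
    rw [two_mul, pow_add, mul_self_tsub_one]
  rw [hk, h2e, inv_pow]
  generalize 2 ^ e - 1 = s
  generalize 2 ^ e = a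
  field_simp
  ring

theorem card_roots_linearized_even_pow_general (n k e : ℕ) (hk1 : 1 ≤ k)
    (he : e = Nat.gcd k n)
    {F : Type*} [Field F] [Fintype F] [DecidableEq F] [CharP F 2]
    (hcard : Fintype.card F = 2 ^ n)
    (heven : Even (n / e))
    (u : F)
    (hpow : ∃ w : F, w ≠ 0 ∧ w ^ (2 ^ e + 1) = u) :
    (Finset.univ.filter fun x : F =>
        u ^ (2 ^ k) * x ^ (2 ^ (2 * k)) + u * x = 0).card = 2 ^ (2 * e) := by
  obtain ⟨w, hw, rfl⟩ := hpow
  obtain ⟨t, ht⟩ : 2 ^ e - 1 ∣ 2 ^ k - 1 :=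
    Nat.pow_sub_one_dvd_pow_sub_one 2 (he ▸ k.gcd_dvd_left n)
  have hm : 2 ^ (2 * k) - 1 ≠ 0 := Nat.sub_ne_zero_of_lt (Nat.one_lt_two_pow (by omega))
  have hgcd : (2 ^ (2 * k) - 1).gcd (Nat.card F - 1) = 2 ^ (2 * e) - 1 := by
    rw [Nat.card_eq_fintype_card, hcard, Nat.pow_sub_one_gcd_pow_sub_one,
      Nat.gcd_two_mul_of_even_div_gcd k n (he ▸ heven), he]
  rw [← Nat.sub_add_cancel (Nat.one_le_two_pow (n := 2 * k)),
    card_filter_mul_pow_succ_add_mul_eq_zero (pow_ne_zero _ (pow_ne_zero _ hw))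
      (pow_ne_zero _ hw) hm, CharTwo.neg_eq, pow_div_pow_two_pow_eq_inv_pow hw ht, ← hgcd,
    FiniteField.card_pow_eq_pow_gcd hm (inv_ne_zero (pow_ne_zero _ hw)), hgcd]
  exact Nat.sub_add_cancel Nat.one_le_two_pow

/-- If `n/e` is even (`e = gcd(k,n)`) and `u` is a nonzero `(2^e+1)`-th power in the field `F`
with `2^n` elements, then `L_u(x) = u^{2^k} x^{2^{2k}} + u x` has exactly `2^{2e}` roots. -/
theorem card_roots_linearized_even_pow (n k e : ℕ) (hk1 : 1 ≤ k) (hkn : k < n)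
    (he : e = Nat.gcd k n)
    {F : Type*} [Field F] [Fintype F] [DecidableEq F] [CharP F 2]
    (hcard : Fintype.card F = 2 ^ n)
    (heven : Even (n / e))
    (u : F) (hu : u ≠ 0)
    (hpow : ∃ w : F, w ≠ 0 ∧ w ^ (2 ^ e + 1) = u) :
    (Finset.univ.filter fun x : F =>
        u ^ (2 ^ k) * x ^ (2 ^ (2 * k)) + u * x = 0).card = 2 ^ (2 * e) :=
  card_roots_linearized_even_pow_general n k e hk1 he hcard heven u hpow
end

section
/- Let n, k be positive integers with 1 ≤ k < n and e = gcd(k, n), and suppose n/e is even. If u ∈ F_q^* is not a (2^e+1)-th power of any element of F_q^*, then x = 0 is the only root in F_q of the linearized polynomial L_u(x) = u^{2^k}·x^{2^{2k}} + u·x. -/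
/-!
Put `q = 2^k`. For a nonzero root `x`, the element `v = u x^(q+1)` satisfies `v^q = v`; together
with `v^(2^n) = v` this gives `v^(2^e) = v`, and every such `v` is a `(2^e+1)`-th power, namely of
`v^(2^(e-1))`. Since `n/e` is even and coprime to `k/e`, the quotient `k/e` is odd, so `2^e + 1`
divides `q + 1`; hence `u = v · (x⁻¹)^(q+1)` would be a `(2^e+1)`-th power.
-/

lemma pow_pow_gcd_eq_self {M : Type*} [Monoid M] {v : M} {p a b : ℕ}
    (ha : v ^ p ^ a = v) (hb : v ^ p ^ b = v) : v ^ p ^ Nat.gcd a b = v := by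
  have hper : ∀ m, v ^ p ^ m = v ↔ Function.IsPeriodicPt (· ^ p) m v := fun m => by
    rw [Function.IsPeriodicPt, Function.IsFixedPt, pow_iterate]
  exact (hper _).2 (((hper a).1 ha).gcd ((hper b).1 hb))

lemma pow_two_mul_add_one_eq_self {M : Type*} [Monoid M] {v : M} {m : ℕ}
    (hv : v ^ (2 * m) = v) : (v ^ m) ^ (2 * m + 1) = v := by
  rw [← pow_mul, mul_add, mul_one, mul_comm, pow_add, pow_mul, hv, ← pow_add, ← two_mul, hv]

lemma exists_pow_two_pow_add_one_eq {M : Type*} [Monoid M] {v : M} {e : ℕ} (he : 0 < e)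
    (hv : v ^ 2 ^ e = v) : ∃ w : M, w ^ (2 ^ e + 1) = v := by
  obtain ⟨f, rfl⟩ := Nat.exists_eq_add_of_lt he
  rw [zero_add, pow_succ'] at hv ⊢
  exact ⟨_, pow_two_mul_add_one_eq_self hv⟩

lemma Nat.odd_div_gcd_of_even_div_gcd {k n : ℕ} (hn : 0 < n) (heven : Even (n / Nat.gcd k n)) :
    Odd (k / Nat.gcd k n) :=
  Nat.Coprime.odd_of_right <|
    (Nat.coprime_div_gcd_div_gcd (Nat.gcd_pos_of_pos_right k hn)).coprime_dvd_right
      (even_iff_two_dvd.1 heven)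

lemma two_pow_add_one_dvd_two_pow_mul_add_one {e m : ℕ} (hm : Odd m) :
    2 ^ e + 1 ∣ 2 ^ (e * m) + 1 := by
  simpa only [one_pow, pow_mul] using hm.nat_add_dvd_pow_add_pow (2 ^ e) 1

lemma pow_eq_self_of_linearized_eq_zero {R : Type*} [CommRing R] [CharP R 2] {u x : R} {k : ℕ}
    (hx : u ^ 2 ^ k * x ^ 2 ^ (2 * k) + u * x = 0) :
    (u * x ^ (2 ^ k + 1)) ^ 2 ^ k = u * x ^ (2 ^ k + 1) := by
  have hx' : u ^ 2 ^ k * x ^ 2 ^ (2 * k) = u * x := CharTwo.add_eq_zero.1 hx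
  calc (u * x ^ (2 ^ k + 1)) ^ 2 ^ k = u ^ 2 ^ k * x ^ 2 ^ (2 * k) * x ^ 2 ^ k := by ring
    _ = u * x ^ (2 ^ k + 1) := by rw [hx']; ring

theorem roots_linearized_even_nonpow_general (n k e : ℕ) (hkn : k < n)
    (he : e = Nat.gcd k n)
    {F : Type*} [Field F] [Fintype F] [CharP F 2]
    (hcard : Fintype.card F = 2 ^ n)
    (heven : Even (n / e))
    (u : F) (hu : u ≠ 0)
    (hpow : ¬ ∃ w : F, w ≠ 0 ∧ w ^ (2 ^ e + 1) = u) :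
    ∀ x : F, u ^ (2 ^ k) * x ^ (2 ^ (2 * k)) + u * x = 0 ↔ x = 0 := by
  intro x
  refine ⟨fun hx => ?_, by rintro rfl; simp⟩
  by_contra hx0
  subst he
  set v := u * x ^ (2 ^ k + 1)
  have hvn : v ^ 2 ^ n = v := hcard ▸ FiniteField.pow_card v
  obtain ⟨w, hw⟩ := exists_pow_two_pow_add_one_eq (Nat.gcd_pos_of_pos_right k (by omega))
    (pow_pow_gcd_eq_self (pow_eq_self_of_linearized_eq_zero hx) hvn)
  obtain ⟨c, hc⟩ : 2 ^ Nat.gcd k n + 1 ∣ 2 ^ k + 1 := by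
    simpa only [Nat.mul_div_cancel' (Nat.gcd_dvd_left k n)] using
      two_pow_add_one_dvd_two_pow_mul_add_one (e := Nat.gcd k n)
        (Nat.odd_div_gcd_of_even_div_gcd (by omega) heven)
  have hroot : (w * x⁻¹ ^ c) ^ (2 ^ Nat.gcd k n + 1) = u := by
    rw [mul_pow, hw, ← pow_mul, mul_comm c, ← hc, inv_pow]
    field_simp
  refine hpow ⟨w * x⁻¹ ^ c, fun h0 => hu ?_, hroot⟩
  rw [← hroot, h0, zero_pow (by positivity)]

/-- If `n/e` is even (`e = gcd(k,n)`) and the nonzero `u` is not a `(2^e+1)`-th power in the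
field `F` with `2^n` elements, then `x = 0` is the only root of
`L_u(x) = u^{2^k} x^{2^{2k}} + u x` in `F`. -/
theorem roots_linearized_even_nonpow (n k e : ℕ) (hk1 : 1 ≤ k) (hkn : k < n)
    (he : e = Nat.gcd k n)
    {F : Type*} [Field F] [Fintype F] [DecidableEq F] [CharP F 2]
    (hcard : Fintype.card F = 2 ^ n)
    (heven : Even (n / e))
    (u : F) (hu : u ≠ 0)
    (hpow : ¬ ∃ w : F, w ≠ 0 ∧ w ^ (2 ^ e + 1) = u) :
    ∀ x : F, u ^ (2 ^ k) * x ^ (2 ^ (2 * k)) + u * x = 0 ↔ x = 0 :=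
  roots_linearized_even_nonpow_general n k e hkn he hcard heven u hu hpow
end

section
/- Let n, k be positive integers with 1 ≤ k < n and e = gcd(k, n), and suppose n/e is even. Let u, v ∈ F_q^*, suppose u = w^{2^e+1} for some w ∈ F_q^*, and suppose the equation L_u(x) = v^{2^k} has no solution x ∈ F_q, where L_u(x) = u^{2^k}·x^{2^{2k}} + u·x. Then the Weil sum S(u, v) = 0. -/
/-!
Write `L = L_u`. Expanding `(x + a)^{2^k+1}` shows that the polar form of the quadratic form
`x ↦ Tr(u x^{2^k+1})` is `(a, x) ↦ Tr(x^{2^k} L(a))`; since it is symmetric, `L` is self-adjoint for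
the nondegenerate pairing `(a, x) ↦ Tr(a^{2^k} x)`. The image of `L` is therefore the orthogonal of
its kernel, and as `v^{2^k}` is not in the image, some `a ∈ ker L` has `Tr(a v) ≠ 0`. For such `a`,
`u a^{2^k+1}` is fixed by `x ↦ x^{2^k}` and `x ↦ x^{2^n}`, so it lies in `F_{2^e}`, and its trace
vanishes because `[F_q : F_{2^e}] = n/e` is even. Hence the substitution `x ↦ x + a`
multiplies each term of `S(u, v)` by `χ1(u a^{2^k+1} + v a) = -1`, and `S(u, v) = 0`.
-/

/-- The absolute trace map `Tr : F → F_2`, viewed inside `F` (its values lie in `{0,1}`),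
for a field `F` with `2^n` elements. -/
def absTr (n : ℕ) {F : Type*} [Field F] (x : F) : F :=
  ∑ i ∈ Finset.range n, x ^ (2 ^ i)

/-- The canonical additive character `χ1(x) = (−1)^{Tr(x)} ∈ ℤ`. -/
def chi (n : ℕ) {F : Type*} [Field F] [DecidableEq F] (x : F) : ℤ :=
  if absTr n x = 0 then 1 else -1

open Finset Function

lemma isPeriodicPt_pow_iff {M : Type*} [Monoid M] {p m : ℕ} {t : M} :
    IsPeriodicPt (· ^ p) m t ↔ t ^ p ^ m = t := by
  simp [IsPeriodicPt, IsFixedPt]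

lemma Fintype.sum_eq_zero_of_add_right_eq_neg {G : Type*} [AddGroup G] [Fintype G] (f : G → ℤ)
    (a : G) (h : ∀ x, f (x + a) = -f x) : ∑ x, f x = 0 := by
  have := Equiv.sum_comp (Equiv.addRight a) f
  simp only [Equiv.coe_addRight, h, sum_neg_distrib] at this
  linarith

section CharTwo

variable {F : Type*} [Field F] [CharP F 2]

lemma absTr_add (n : ℕ) (x y : F) : absTr n (x + y) = absTr n x + absTr n y := by
  simp only [absTr, add_pow_char_pow, sum_add_distrib]

lemma absTr_two_mul_eq_zero {m : ℕ} {t : F} (ht : t ^ 2 ^ m = t) : absTr (2 * m) t = 0 := by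
  have hshift (i : ℕ) : t ^ 2 ^ (m + i) = t ^ 2 ^ i := by rw [pow_add, pow_mul, ht]
  simp only [absTr, two_mul, sum_range_add, hshift, CharTwo.add_self_eq_zero]

lemma absTr_eq_zero_of_pow_eq_self {e n : ℕ} (he : e ∣ n) (heven : Even (n / e)) {t : F}
    (ht : t ^ 2 ^ e = t) : absTr n t = 0 := by
  obtain ⟨j, hj⟩ := heven
  have hn : n = 2 * (e * j) := by rw [← Nat.mul_div_cancel' he, hj]; ring
  rw [hn]
  exact absTr_two_mul_eq_zero (isPeriodicPt_pow_iff.1 ((isPeriodicPt_pow_iff.2 ht).mul_const j))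

end CharTwo

section FiniteField

variable {F : Type*} [Field F] [Fintype F] {n : ℕ} (hcard : Fintype.card F = 2 ^ n)
include hcard

lemma pow_two_pow_eq_self (x : F) : x ^ 2 ^ n = x := hcard ▸ FiniteField.pow_card x

lemma absTr_sq (x : F) : absTr n (x ^ 2) = absTr n x := by
  have h := (sum_range_succ' (fun i => x ^ 2 ^ i) n).symm.trans (sum_range_succ _ n)
  rw [pow_zero, pow_one, pow_two_pow_eq_self hcard, add_left_inj] at h
  simpa only [absTr, ← pow_mul, ← pow_succ'] using h

lemma absTr_pow_two_pow (m : ℕ) (x : F) : absTr n (x ^ 2 ^ m) = absTr n x := by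
  induction m with
  | zero => rw [pow_zero, pow_one]
  | succ m ih => rw [pow_succ, pow_mul, absTr_sq hcard, ih]

lemma exists_absTr_ne_zero : ∃ x : F, absTr n x ≠ 0 := by
  have hn : n ≠ 0 := by
    rintro rfl
    simpa [hcard] using Fintype.one_lt_card (α := F)
  by_contra! h
  let p : Polynomial F := ∑ i ∈ range n, .X ^ 2 ^ i
  have hp : p = 0 := by
    refine Polynomial.eq_zero_of_natDegree_lt_card_of_eval_eq_zero' p univ
      (fun x _ => by simpa [p, Polynomial.eval_finsetSum, absTr] using h x) ?_
    calc p.natDegree ≤ 2 ^ (n - 1) := Polynomial.natDegree_sum_le_of_forall_le _ _ fun i hi => by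
            rw [Polynomial.natDegree_X_pow]
            exact Nat.pow_le_pow_right two_pos (Nat.le_sub_one_of_lt (mem_range.1 hi))
      _ < #univ := by rw [card_univ, hcard]; exact Nat.pow_lt_pow_right one_lt_two (by omega)
  have hcoeff : p.coeff (2 ^ (n - 1)) = 1 := by
    rw [Polynomial.finsetSum_coeff, sum_eq_single (n - 1)]
    · simp
    · intro i _ hi
      simp [Polynomial.coeff_X_pow, (Nat.pow_right_injective le_rfl).ne hi.symm]
    · exact fun h => absurd (mem_range.2 (by omega)) h
  simp [hp] at hcoeff

variable [CharP F 2]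

lemma absTr_eq_zero_or_one (x : F) : absTr n x = 0 ∨ absTr n x = 1 := by
  have hsq : absTr n x ^ 2 = absTr n (x ^ 2) := by
    simp only [absTr, sum_pow_char, ← pow_mul, mul_comm]
  refine IsIdempotentElem.iff_eq_zero_or_one.1 ?_
  rw [IsIdempotentElem, ← sq, hsq, absTr_sq hcard]

variable [DecidableEq F]

lemma chi_add (x y : F) : chi n (x + y) = chi n x * chi n y := by
  unfold chi
  rw [absTr_add]
  rcases absTr_eq_zero_or_one hcard x with hx | hx <;>
    rcases absTr_eq_zero_or_one hcard y with hy | hy <;>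
    simp [hx, hy, CharTwo.add_self_eq_zero]

lemma sum_chi_mul (b : F) : ∑ x, chi n (x * b) = if b = 0 then 2 ^ n else 0 := by
  split_ifs with hb
  · simp [hb, chi, absTr, hcard]
  · obtain ⟨x₀, hx₀⟩ := exists_absTr_ne_zero hcard
    refine Fintype.sum_eq_zero_of_add_right_eq_neg _ (x₀ * b⁻¹) fun x => ?_
    rw [add_mul, inv_mul_cancel_right₀ hb, chi_add hcard]
    simp [chi, hx₀]

/-- `(ker L)ᗮ ⊆ range L` for `L` self-adjoint with respect to the nondegenerate pairing
`(a, x) ↦ Tr(σ a * x)`. -/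
lemma exists_absTr_ne_zero_of_forall_ne (σ : F ≃ F) (L : F →+ F)
    (hsymm : ∀ a x, absTr n (σ a * L x) = absTr n (σ x * L a)) {w : F} (hw : ∀ x, L x ≠ w) :
    ∃ a, L a = 0 ∧ absTr n (σ a * w) ≠ 0 := by
  have hchi (a x : F) : chi n (σ a * L x) = chi n (σ x * L a) := by unfold chi; rw [hsymm]
  have hsum : ∑ a, chi n (σ a * w) * (if L a = 0 then (2 : ℤ) ^ n else 0) = 0 :=
    calc ∑ a, chi n (σ a * w) * (if L a = 0 then (2 : ℤ) ^ n else 0)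
        = ∑ a, ∑ x, chi n (σ a * (L x + w)) := by
          refine sum_congr rfl fun a _ => ?_
          rw [← sum_chi_mul hcard, mul_sum, ← Equiv.sum_comp σ]
          refine sum_congr rfl fun x _ => ?_
          rw [mul_add, chi_add hcard, mul_comm, hchi]
      _ = ∑ x, ∑ c, chi n (c * (L x + w)) := by
          rw [sum_comm]
          exact sum_congr rfl fun x _ => Equiv.sum_comp σ fun c => chi n (c * (L x + w))
      _ = 0 := sum_eq_zero fun x _ => by
          rw [sum_chi_mul hcard, if_neg fun h => hw x (CharTwo.add_eq_zero.1 h)]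
  simp only [mul_ite, mul_zero, ← sum_filter, ← sum_mul] at hsum
  have hker := (mul_eq_zero.1 hsum).resolve_right (pow_ne_zero _ two_ne_zero)
  by_contra! h
  have hcard_ker : (#{a | L a = 0} : ℤ) = 0 := by
    rw [← hker, card_eq_sum_ones, Nat.cast_sum]
    exact sum_congr rfl fun a ha => by simp [chi, h a (mem_filter.1 ha).2]
  have h0 : (0 : F) ∈ ({a | L a = 0} : Finset F) := by simp
  exact card_ne_zero_of_mem h0 (by exact_mod_cast hcard_ker)

end FiniteField

section Gold

variable {F : Type*} [Field F] [CharP F 2]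

def goldLinearized (k : ℕ) (u : F) : F →+ F where
  toFun x := u ^ 2 ^ k * x ^ 2 ^ (2 * k) + u * x
  map_zero' := by simp
  map_add' x y := by simp only [add_pow_char_pow]; ring

lemma goldLinearized_apply (k : ℕ) (u x : F) :
    goldLinearized k u x = u ^ 2 ^ k * x ^ 2 ^ (2 * k) + u * x := rfl

lemma pow_two_pow_eq_self_of_goldLinearized_eq_zero {k : ℕ} {u a : F}
    (ha : goldLinearized k u a = 0) : (u * a ^ (2 ^ k + 1)) ^ 2 ^ k = u * a ^ (2 ^ k + 1) := by
  rw [goldLinearized_apply, CharTwo.add_eq_zero] at ha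
  have hexp : (2 ^ k + 1) * 2 ^ k = 2 ^ (2 * k) + 2 ^ k := by ring
  calc (u * a ^ (2 ^ k + 1)) ^ 2 ^ k = u ^ 2 ^ k * a ^ 2 ^ (2 * k) * a ^ 2 ^ k := by
        rw [mul_pow, ← pow_mul, hexp, pow_add, mul_assoc]
    _ = u * a ^ (2 ^ k + 1) := by rw [ha, pow_succ]; ring

variable [Fintype F] {n : ℕ} (hcard : Fintype.card F = 2 ^ n)
include hcard

lemma absTr_mul_goldLinearized (k : ℕ) (u a x : F) :
    absTr n (x ^ 2 ^ k * goldLinearized k u a) = absTr n (u * (a * x ^ 2 ^ k + a ^ 2 ^ k * x)) := by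
  have hfrob : x ^ 2 ^ k * (u ^ 2 ^ k * a ^ 2 ^ (2 * k)) = (u * a ^ 2 ^ k * x) ^ 2 ^ k := by
    rw [mul_pow, mul_pow, ← pow_mul, ← pow_add, ← two_mul]; ring
  rw [goldLinearized_apply, mul_add, absTr_add, hfrob, absTr_pow_two_pow hcard, ← absTr_add]
  congr 1; ring

lemma absTr_pow_mul_goldLinearized_comm (k : ℕ) (u a x : F) :
    absTr n (a ^ 2 ^ k * goldLinearized k u x) = absTr n (x ^ 2 ^ k * goldLinearized k u a) := by
  rw [absTr_mul_goldLinearized hcard, absTr_mul_goldLinearized hcard]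
  congr 1; ring

lemma absTr_eq_zero_of_goldLinearized_eq_zero {k e : ℕ} (he : e = Nat.gcd k n)
    (heven : Even (n / e)) {u a : F} (ha : goldLinearized k u a = 0) :
    absTr n (u * a ^ (2 ^ k + 1)) = 0 := by
  have hk := isPeriodicPt_pow_iff.2 (pow_two_pow_eq_self_of_goldLinearized_eq_zero ha)
  have hn := isPeriodicPt_pow_iff.2 (pow_two_pow_eq_self hcard (u * a ^ (2 ^ k + 1)))
  exact absTr_eq_zero_of_pow_eq_self (he ▸ Nat.gcd_dvd_right k n) heven
    (isPeriodicPt_pow_iff.1 (he ▸ hk.gcd hn))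

variable [DecidableEq F]

lemma chi_add_of_goldLinearized_eq_zero {k : ℕ} {u a : F} (ha : goldLinearized k u a = 0)
    (v x : F) :
    chi n (u * (x + a) ^ (2 ^ k + 1) + v * (x + a))
      = chi n (u * x ^ (2 ^ k + 1) + v * x) * chi n (u * a ^ (2 ^ k + 1) + v * a) := by
  have hexpand : u * (x + a) ^ (2 ^ k + 1) + v * (x + a) = (u * x ^ (2 ^ k + 1) + v * x)
      + (u * a ^ (2 ^ k + 1) + v * a) + u * (a * x ^ 2 ^ k + a ^ 2 ^ k * x) := by
    rw [pow_succ, add_pow_char_pow]; ring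
  have hpolar : chi n (u * (a * x ^ 2 ^ k + a ^ 2 ^ k * x)) = 1 := by
    rw [chi, ← absTr_mul_goldLinearized hcard, ha, mul_zero, if_pos]
    simp [absTr]
  rw [hexpand, chi_add hcard, chi_add hcard, hpolar, mul_one]

end Gold

theorem weil_sum_gold_even_pow_unsolvable_general (n k e : ℕ)
    (he : e = Nat.gcd k n) (heven : Even (n / e))
    {F : Type*} [Field F] [Fintype F] [DecidableEq F] [CharP F 2]
    (hcard : Fintype.card F = 2 ^ n)
    (u v : F)
    (hsol : ¬ ∃ x : F, u ^ (2 ^ k) * x ^ (2 ^ (2 * k)) + u * x = v ^ (2 ^ k)) :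
    ∑ x : F, chi n (u * x ^ (2 ^ k + 1) + v * x) = 0 := by
  obtain ⟨a, ha, hva⟩ := exists_absTr_ne_zero_of_forall_ne hcard
    (iterateFrobeniusEquiv F 2 k).toEquiv (goldLinearized k u)
    (absTr_pow_mul_goldLinearized_comm hcard k u) (w := v ^ 2 ^ k) fun x hx => hsol ⟨x, hx⟩
  have hchi : chi n (u * a ^ (2 ^ k + 1) + v * a) = -1 := if_neg <| by
    rwa [absTr_add, absTr_eq_zero_of_goldLinearized_eq_zero hcard he heven ha, zero_add,
      ← absTr_pow_two_pow hcard k, mul_pow, mul_comm]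
  refine Fintype.sum_eq_zero_of_add_right_eq_neg _ a fun x => ?_
  rw [chi_add_of_goldLinearized_eq_zero hcard ha, hchi, mul_neg_one]

/-- If `n/e` is even (`e = gcd(k,n)`), `u, v ≠ 0`, `u` is a `(2^e+1)`-th power, and
`L_u(x) = v^{2^k}` has no solution, then the Weil sum `S(u,v)` vanishes. -/
theorem weil_sum_gold_even_pow_unsolvable (n k e : ℕ) (hk1 : 1 ≤ k) (hkn : k < n)
    (he : e = Nat.gcd k n) (heven : Even (n / e))
    {F : Type*} [Field F] [Fintype F] [DecidableEq F] [CharP F 2]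
    (hcard : Fintype.card F = 2 ^ n)
    (u v : F) (hu : u ≠ 0) (hv : v ≠ 0)
    (hpow : ∃ w : F, w ≠ 0 ∧ w ^ (2 ^ e + 1) = u)
    (hsol : ¬ ∃ x : F, u ^ (2 ^ k) * x ^ (2 ^ (2 * k)) + u * x = v ^ (2 ^ k)) :
    ∑ x : F, chi n (u * x ^ (2 ^ k + 1) + v * x) = 0 :=
  weil_sum_gold_even_pow_unsolvable_general n k e he heven hcard u v hsol
end

section
/- Let n, k be positive integers with 1 ≤ k < n and e = gcd(k, n). For u ∈ F_q, one has Tr_e(u · (β^{2^{n−k}} + β)) = 0 for all β ∈ F_q if and only if u^{2^k} = u (equivalently, if and only if u belongs to the subfield F_{2^e}). -/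
/-!
Since `e ∣ n` and `x ^ 2 ^ n = x` on `F`, the relative trace is invariant under `x ↦ x ^ 2 ^ e`,
hence under `x ↦ x ^ 2 ^ k`. Applied to `u * β ^ 2 ^ (n - k)` this moves the Frobenius power onto
`u`, so `Tr_e (u (β ^ 2 ^ (n - k) + β)) = Tr_e ((u ^ 2 ^ k + u) β)`. The trace form is
nondegenerate because `Tr_e` is given by a polynomial with coefficient 1 at `X` and degree `2 ^ (n - e) < |F|`.
-/

/-- The relative trace `Tr_e : F → F_{2^e}`, viewed inside `F`. -/
def relTr (n e : ℕ) {F : Type*} [Field F] (x : F) : F :=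
  ∑ i ∈ Finset.range (n / e), x ^ (2 ^ (e * i))

open Polynomial

section
variable {F : Type*} [Field F]

@[simp]
lemma relTr_zero (n e : ℕ) : relTr n e (0 : F) = 0 := by
  simp [relTr]

lemma relTr_add [CharP F 2] (n e : ℕ) (a b : F) :
    relTr n e (a + b) = relTr n e a + relTr n e b := by
  have : Fact (Nat.Prime 2) := ⟨Nat.prime_two⟩
  rw [relTr, relTr, relTr, ← Finset.sum_add_distrib]
  exact Finset.sum_congr rfl fun i _ => add_pow_char_pow a b 2 (e * i)

lemma relTr_pow_two_pow {n e : ℕ} (hen : e ∣ n) {x : F} (hx : x ^ 2 ^ n = x) :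
    relTr n e (x ^ 2 ^ e) = relTr n e x := by
  have hshift : ∀ i, (x ^ 2 ^ e) ^ 2 ^ (e * i) = x ^ 2 ^ (e * (i + 1)) := fun i => by
    rw [← pow_mul, ← pow_add, mul_add_one, add_comm]
  have hlast : x ^ 2 ^ (e * (n / e)) = x := by rw [Nat.mul_div_cancel' hen, hx]
  have hcycle := Finset.sum_range_succ' (fun i => x ^ 2 ^ (e * i)) (n / e)
  rw [Finset.sum_range_succ, hlast, mul_zero, pow_zero, pow_one] at hcycle
  simp only [relTr, hshift]
  exact (add_right_cancel hcycle).symm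

lemma relTr_pow_two_pow_mul {n e : ℕ} (hen : e ∣ n) {x : F} (hx : x ^ 2 ^ n = x) (m : ℕ) :
    relTr n e (x ^ 2 ^ (e * m)) = relTr n e x := by
  induction m with
  | zero => simp
  | succ m ih =>
    have hxm : (x ^ 2 ^ (e * m)) ^ 2 ^ n = x ^ 2 ^ (e * m) := by
      rw [← pow_mul, mul_comm, pow_mul, hx]
    rw [mul_add_one, pow_add, pow_mul, relTr_pow_two_pow hen hxm, ih]

lemma relTr_mul_pow_two_pow_sub {n k e : ℕ} (hen : e ∣ n) (hek : e ∣ k) (hkn : k ≤ n)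
    (hF : ∀ x : F, x ^ 2 ^ n = x) (u β : F) :
    relTr n e (u * β ^ 2 ^ (n - k)) = relTr n e (u ^ 2 ^ k * β) := by
  obtain ⟨m, rfl⟩ := hek
  rw [← relTr_pow_two_pow_mul hen (hF _) m, mul_pow, ← pow_mul, ← pow_add,
    Nat.sub_add_cancel hkn, hF]

lemma relTr_mul_frobenius_add [CharP F 2] {n k e : ℕ} (hen : e ∣ n) (hek : e ∣ k)
    (hkn : k ≤ n) (hF : ∀ x : F, x ^ 2 ^ n = x) (u β : F) :
    relTr n e (u * (β ^ 2 ^ (n - k) + β)) = relTr n e ((u ^ 2 ^ k + u) * β) := by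
  rw [mul_add, add_mul, relTr_add, relTr_add, relTr_mul_pow_two_pow_sub hen hek hkn hF]

noncomputable def relTrPoly (n e : ℕ) : F[X] :=
  ∑ i ∈ Finset.range (n / e), X ^ 2 ^ (e * i)

lemma eval_relTrPoly (n e : ℕ) (x : F) : (relTrPoly n e).eval x = relTr n e x := by
  simp [relTrPoly, relTr, eval_finsetSum]

lemma coeff_one_relTrPoly {n e : ℕ} (he : 0 < e) (hN : 0 < n / e) :
    (relTrPoly n e : F[X]).coeff 1 = 1 := by
  rw [relTrPoly, finsetSum_coeff, Finset.sum_eq_single_of_mem 0 (Finset.mem_range.2 hN)]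
  · simp
  · intro i _ hi
    have : 1 < 2 ^ (e * i) := Nat.one_lt_two_pow (by positivity)
    simp [coeff_X_pow, this.ne]

lemma natDegree_relTrPoly_lt {n e : ℕ} (hn : 0 < n) (hen : e ∣ n) :
    (relTrPoly n e : F[X]).natDegree < 2 ^ n := by
  have he : 0 < e := Nat.pos_of_dvd_of_pos hen hn
  have hlt : ∀ i ∈ Finset.range (n / e), e * i < n := fun i hi => by
    calc e * i < e * (n / e) := Nat.mul_lt_mul_of_pos_left (Finset.mem_range.1 hi) he
      _ = n := Nat.mul_div_cancel' hen
  refine lt_of_le_of_lt (natDegree_sum_le_of_forall_le _ _ (n := 2 ^ (n - 1)) fun i hi => ?_)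
    (Nat.pow_lt_pow_right one_lt_two (Nat.sub_lt hn one_pos))
  rw [natDegree_X_pow]
  exact Nat.pow_le_pow_right two_pos (Nat.le_sub_one_of_lt (hlt i hi))

lemma exists_relTr_ne_zero [Fintype F] {n e : ℕ} (hn : 0 < n) (hen : e ∣ n)
    (hcard : Fintype.card F = 2 ^ n) : ∃ x : F, relTr n e x ≠ 0 := by
  have he : 0 < e := Nat.pos_of_dvd_of_pos hen hn
  have hN : 0 < n / e := Nat.div_pos (Nat.le_of_dvd hn hen) he
  have hP : (relTrPoly n e : F[X]) ≠ 0 := fun h => by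
    simpa [h] using coeff_one_relTrPoly (F := F) he hN
  obtain ⟨x, hx⟩ := exists_eval_ne_zero_of_natDegree_lt_card _ hP
    (by rw [Cardinal.mk_fintype, hcard]; exact_mod_cast natDegree_relTrPoly_lt hn hen)
  exact ⟨x, by rwa [eval_relTrPoly] at hx⟩

lemma forall_relTr_mul_eq_zero_iff [Fintype F] {n e : ℕ} (hn : 0 < n) (hen : e ∣ n)
    (hcard : Fintype.card F = 2 ^ n) (a : F) :
    (∀ β : F, relTr n e (a * β) = 0) ↔ a = 0 := by
  refine ⟨fun h => ?_, fun ha β => by simp [ha]⟩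
  by_contra ha
  obtain ⟨x, hx⟩ := exists_relTr_ne_zero hn hen hcard
  exact hx (by simpa [← mul_assoc, mul_inv_cancel₀ ha] using h (a⁻¹ * x))

end

theorem relTr_orthogonal_iff_general (n k e : ℕ) (hkn : k < n)
    (he : e = Nat.gcd k n)
    {F : Type*} [Field F] [Fintype F] [CharP F 2]
    (hcard : Fintype.card F = 2 ^ n) :
    ∀ u : F,
      (∀ β : F, relTr n e (u * (β ^ (2 ^ (n - k)) + β)) = 0) ↔ u ^ (2 ^ k) = u := by
  intro u
  have hen : e ∣ n := he ▸ Nat.gcd_dvd_right k n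
  have hek : e ∣ k := he ▸ Nat.gcd_dvd_left k n
  have hF : ∀ x : F, x ^ 2 ^ n = x := hcard ▸ FiniteField.pow_card
  simp only [relTr_mul_frobenius_add hen hek hkn.le hF,
    forall_relTr_mul_eq_zero_iff (Nat.zero_lt_of_lt hkn) hen hcard, CharTwo.add_eq_zero]

/-- For `u` in the field `F` with `2^n` elements (`e = gcd(k,n)`):
`Tr_e(u (β^{2^{n−k}} + β)) = 0` for all `β` if and only if `u^{2^k} = u`. -/
theorem relTr_orthogonal_iff (n k e : ℕ) (hk1 : 1 ≤ k) (hkn : k < n)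
    (he : e = Nat.gcd k n)
    {F : Type*} [Field F] [Fintype F] [DecidableEq F] [CharP F 2]
    (hcard : Fintype.card F = 2 ^ n) :
    ∀ u : F,
      (∀ β : F, relTr n e (u * (β ^ (2 ^ (n - k)) + β)) = 0) ↔ u ^ (2 ^ k) = u :=
  relTr_orthogonal_iff_general n k e hkn he hcard
end

section
/- Let n ≥ 2 and 1 ≤ k < n with e = gcd(k, n), and suppose n/e is odd. Then for every b ∈ F_q^*, the number of pairs (x, y) ∈ F_q × F_q satisfying x^{2^k+1} + y^{2^k+1} = b and (x+1)^{2^k+1} + (y+1)^{2^k+1} = b equals 0 if Tr_e(b^{2^{n−1}}) = 0, and equals 2^e if Tr_e(b^{2^{n−1}}) ≠ 0. (Here b^{2^{n−1}} is the unique square root of b in F_q.) -/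
open Finset Polynomial

section IteratedPower

variable {M : Type*} [Monoid M] {x : M} {m a : ℕ}

theorem isPeriodicPt_pow_iff_s13 : Function.IsPeriodicPt (· ^ m) a x ↔ x ^ m ^ a = x := by
  simp [Function.IsPeriodicPt, Function.IsFixedPt]

theorem pow_pow_mul_eq_self (h : x ^ m ^ a = x) (q : ℕ) : x ^ m ^ (a * q) = x :=
  isPeriodicPt_pow_iff_s13.mp ((isPeriodicPt_pow_iff_s13.mpr h).mul_const q)

theorem pow_pow_eq_self_iff_gcd {n : ℕ} (hx : x ^ m ^ n = x) :
    x ^ m ^ a = x ↔ x ^ m ^ Nat.gcd a n = x := by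
  refine ⟨fun ha => ?_, fun hg => ?_⟩
  · exact isPeriodicPt_pow_iff_s13.mp
      ((isPeriodicPt_pow_iff_s13.mpr ha).gcd (isPeriodicPt_pow_iff_s13.mpr hx))
  · obtain ⟨t, ht⟩ := Nat.gcd_dvd_left a n
    rw [ht]
    exact pow_pow_mul_eq_self hg t

end IteratedPower

section Fibers

variable {G H : Type*} [AddGroup G] [Fintype G] [AddMonoid H] [DecidableEq H]

theorem AddMonoidHom.card_fiber_of_mem_image (f : G →+ H) {a : H} (ha : a ∈ univ.image f) :
    #{x | f x = a} = #{x | f x = 0} := by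
  obtain ⟨x, -, rfl⟩ := mem_image.mp ha
  exact card_fiber_eq_of_mem_range f ⟨x, rfl⟩ ⟨0, map_zero f⟩

theorem card_image_mul_card_ker (f : G →+ H) :
    #(univ.image f) * #{x | f x = 0} = Fintype.card G := by
  rw [← card_univ, card_eq_sum_card_image f univ, ← smul_eq_mul, ← sum_const]
  exact sum_congr rfl fun a ha => (f.card_fiber_of_mem_image ha).symm

end Fibers

theorem card_filter_eq_sum_card_filter_add {G : Type*} [AddGroup G] [Fintype G]
    (P : G × G → Prop) [DecidablePred P] : #{p | P p} = ∑ c, #{x | P (x, x + c)} := by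
  calc #{p | P p} = #{p : G × G | P (p.1, p.1 + p.2)} :=
        (card_equiv (Equiv.prodShear (Equiv.refl G) Equiv.addLeft) fun p => by simp).symm
    _ = ∑ c, #{x | P (x, x + c)} := by
        simp only [card_filter]
        exact Fintype.sum_prod_type_right' fun x c => if P (x, x + c) then 1 else 0

theorem Polynomial.card_filter_eval_eq_zero_le {R : Type*} [CommRing R] [IsDomain R] [Fintype R]
    [DecidableEq R] {p : R[X]} (hp : p ≠ 0) : #{x | p.eval x = 0} ≤ p.natDegree :=
  card_le_degree_of_subset_roots fun x hx => by simpa [mem_roots hp] using hx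

namespace relTr

variable {F : Type*} [Field F] (n e : ℕ)

theorem mul_of_pow_eq_self {c : F} (hc : c ^ 2 ^ e = c) (x : F) :
    relTr n e (x * c) = relTr n e x * c := by
  simp only [relTr, sum_mul, mul_pow, pow_pow_mul_eq_self hc]

theorem of_pow_eq_self [CharP F 2] {c : F} (hc : c ^ 2 ^ e = c) (hodd : Odd (n / e)) :
    relTr n e c = c := by
  obtain ⟨t, ht⟩ := hodd
  simp only [relTr, pow_pow_mul_eq_self hc, sum_const, card_range, ht, add_nsmul, one_nsmul,
    mul_nsmul', two_nsmul, CharTwo.add_self_eq_zero, zero_add]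

variable [CharP F 2]

theorem add (x y : F) : relTr n e (x + y) = relTr n e x + relTr n e y := by
  simp only [relTr, add_pow_char_pow, sum_add_distrib]

theorem pow_two_pow (x : F) (j : ℕ) : relTr n e x ^ 2 ^ j = relTr n e (x ^ 2 ^ j) := by
  simp only [relTr, sum_pow_char_pow, ← pow_mul, mul_comm]

theorem pow_two_pow_eq_self (hen : e ∣ n) {x : F} (hx : x ^ 2 ^ n = x) :
    relTr n e x ^ 2 ^ e = relTr n e x := by
  have hshift : ∀ i, (x ^ 2 ^ e) ^ 2 ^ (e * i) = x ^ 2 ^ (e * (i + 1)) := fun i => by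
    rw [← pow_mul, ← pow_add, mul_add_one, add_comm]
  have hwrap : x ^ 2 ^ (e * (n / e)) = x ^ 2 ^ (e * 0) := by
    rw [Nat.mul_div_cancel' hen, hx, mul_zero, pow_zero, pow_one]
  rw [pow_two_pow, relTr]
  simp only [hshift]
  rw [← add_left_inj (x ^ 2 ^ (e * 0)), ← sum_range_succ' (fun i => x ^ 2 ^ (e * i)),
    sum_range_succ, hwrap]
  rfl

def hom : F →+ F := AddMonoidHom.mk' (relTr n e) (add n e)

theorem mul_inv_add_self_eq_zero_iff (hodd : Odd (n / e)) {b c t : F} (hc : c ^ 2 ^ e = c)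
    (hc0 : c ≠ 0) (ht : t ^ 2 = relTr n e b) : relTr n e (b * c⁻¹ + c) = 0 ↔ c = t := by
  have hc' : c⁻¹ ^ 2 ^ e = c⁻¹ := by rw [inv_pow, hc]
  have hsq : t ^ 2 * c⁻¹ + c = (c + t) ^ 2 * c⁻¹ := by
    rw [CharTwo.add_sq]
    field_simp
    ring
  rw [add, mul_of_pow_eq_self n e hc', of_pow_eq_self n e hc hodd, ← ht, hsq,
    mul_eq_zero, inv_eq_zero, or_iff_left hc0, pow_eq_zero_iff two_ne_zero, CharTwo.add_eq_zero]

end relTr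

section Gold

variable {R : Type*} [CommRing R] [CharP R 2]

theorem add_pow_two_pow_add_one (x c : R) (k : ℕ) :
    (x + c) ^ (2 ^ k + 1) = x ^ (2 ^ k + 1) + c * x ^ 2 ^ k + c ^ 2 ^ k * x + c ^ (2 ^ k + 1) := by
  rw [pow_succ, add_pow_char_pow, pow_succ, pow_succ]
  ring

theorem gold_pair_iff (x c b : R) (k : ℕ) :
    (x ^ (2 ^ k + 1) + (x + c) ^ (2 ^ k + 1) = b ∧
        (x + 1) ^ (2 ^ k + 1) + (x + c + 1) ^ (2 ^ k + 1) = b) ↔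
      c ^ 2 ^ k = c ∧ c * (x ^ 2 ^ k + x) + c ^ 2 = b := by
  have h2 : (2 : R) = 0 := CharTwo.two_eq_zero
  have hexpand : ∀ u : R, u ^ (2 ^ k + 1) + (u + c) ^ (2 ^ k + 1) =
      c * u ^ 2 ^ k + c ^ 2 ^ k * u + c ^ 2 ^ k * c := fun u => by
    rw [add_pow_two_pow_add_one, pow_succ c]
    linear_combination u ^ (2 ^ k + 1) * h2
  rw [hexpand, add_right_comm x c 1, hexpand, add_pow_char_pow, one_pow]
  constructor
  · rintro ⟨h1, h2'⟩
    have hc : c ^ 2 ^ k = c := by linear_combination h2' - h1 - c * h2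
    refine ⟨hc, ?_⟩
    rw [hc] at h1
    linear_combination h1
  · rintro ⟨hc, h⟩
    rw [hc]
    constructor
    · linear_combination h
    · linear_combination h + c * h2

def frobAddSelf (F : Type*) [CommRing F] [CharP F 2] (k : ℕ) : F →+ F :=
  AddMonoidHom.mk' (fun x => x ^ 2 ^ k + x) fun x y => by rw [add_pow_char_pow]; ring

end Gold

section FiniteField

variable {F : Type*} [Field F] [Fintype F] {n e : ℕ}

theorem ne_zero_of_card_eq_two_pow (hcard : Fintype.card F = 2 ^ n) : n ≠ 0 := by
  rintro rfl
  exact (Fintype.one_lt_card (α := F)).ne' hcard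

theorem pow_two_pow_eq_self_of_card (hcard : Fintype.card F = 2 ^ n) (x : F) : x ^ 2 ^ n = x :=
  hcard ▸ FiniteField.pow_card x

theorem sq_pow_two_pow_pred (hcard : Fintype.card F = 2 ^ n) (b : F) :
    (b ^ 2 ^ (n - 1)) ^ 2 = b := by
  rw [← pow_mul, ← pow_succ, Nat.sub_add_cancel (Nat.one_le_iff_ne_zero.mpr
    (ne_zero_of_card_eq_two_pow hcard)), pow_two_pow_eq_self_of_card hcard]

variable [DecidableEq F]

theorem card_filter_pow_eq_self_le {q : ℕ} (hq : 1 < q) : #{x : F | x ^ q = x} ≤ q := by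
  calc #{x : F | x ^ q = x} = #{x : F | (X ^ q - X : F[X]).eval x = 0} := by
        simp only [eval_sub, eval_pow, eval_X, sub_eq_zero]
    _ ≤ (X ^ q - X : F[X]).natDegree :=
        card_filter_eval_eq_zero_le (FiniteField.X_pow_card_sub_X_ne_zero F hq)
    _ = q := FiniteField.X_pow_card_sub_X_natDegree_eq F hq

theorem relTr.card_ker_le (he : 0 < e) (hen : e ≤ n) :
    #{x : F | relTr n e x = 0} ≤ 2 ^ (n - e) := by
  set p : F[X] := ∑ i ∈ range (n / e), X ^ 2 ^ (e * i)
  have hm : n / e - 1 < n / e := Nat.sub_lt (Nat.div_pos hen he) one_pos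
  have hdeg : ∀ i ∈ range (n / e), (X ^ 2 ^ (e * i) : F[X]).natDegree ≤ 2 ^ (n - e) := by
    intro i hi
    have hi' : e * (i + 1) ≤ e * (n / e) := Nat.mul_le_mul_left e (mem_range.mp hi)
    have := Nat.mul_div_le n e
    rw [natDegree_X_pow]
    exact Nat.pow_le_pow_right two_pos (by rw [mul_add_one] at hi'; omega)
  have hp : p ≠ 0 := by
    intro h0
    have hc := congrArg (coeff · (2 ^ (e * (n / e - 1)))) h0
    simp only [p, finsetSum_coeff, coeff_X_pow, coeff_zero] at hc
    rw [sum_eq_single_of_mem _ (mem_range.mpr hm) fun i _ hi => if_neg fun h =>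
      hi (Nat.eq_of_mul_eq_mul_left he (Nat.pow_right_injective le_rfl h)).symm] at hc
    simp at hc
  calc #{x : F | relTr n e x = 0} = #{x : F | p.eval x = 0} :=
        congrArg card (filter_congr fun x _ => by simp [p, eval_finsetSum, relTr])
    _ ≤ p.natDegree := card_filter_eval_eq_zero_le hp
    _ ≤ 2 ^ (n - e) := natDegree_sum_le_of_forall_le _ _ hdeg

/-- Squeezing `|Tr_e(F)| · |ker Tr_e| = 2^n` between the two root bounds,
using `Tr_e(F) ⊆ F_{2^e}`. -/
theorem card_fixed_and_card_ker_relTr [CharP F 2] (hcard : Fintype.card F = 2 ^ n) (he : 0 < e)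
    (hen : e ∣ n) :
    #{x : F | x ^ 2 ^ e = x} = 2 ^ e ∧ #{x : F | relTr n e x = 0} = 2 ^ (n - e) := by
  have hle : e ≤ n := Nat.le_of_dvd (Nat.pos_of_ne_zero (ne_zero_of_card_eq_two_pow hcard)) hen
  have himage : univ.image (relTr n e) ⊆ ({x : F | x ^ 2 ^ e = x} : Finset F) := by
    intro a ha
    obtain ⟨x, -, rfl⟩ := mem_image.mp ha
    simpa using relTr.pow_two_pow_eq_self n e hen (pow_two_pow_eq_self_of_card hcard x)
  have hfix_le := card_filter_pow_eq_self_le (F := F) (Nat.one_lt_two_pow he.ne')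
  have hprod := card_image_mul_card_ker (relTr.hom n e (F := F))
  rw [hcard, ← pow_mul_pow_sub 2 hle] at hprod
  have hker_le := relTr.card_ker_le (F := F) he hle
  have himage_pos : 0 < #(univ.image (relTr.hom n e (F := F))) := by simp
  obtain ⟨himage_card, hker⟩ := (mul_eq_mul_iff_eq_and_eq_of_pos
    ((card_le_card himage).trans hfix_le) hker_le himage_pos (by positivity)).mp hprod
  exact ⟨le_antisymm hfix_le (himage_card.ge.trans (card_le_card himage)), hker⟩

section Linearized

variable [CharP F 2] {k : ℕ} (hcard : Fintype.card F = 2 ^ n) (he : e = Nat.gcd k n)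
include hcard he

theorem card_ker_frobAddSelf : #{x : F | frobAddSelf F k x = 0} = 2 ^ e := by
  have hn := ne_zero_of_card_eq_two_pow hcard
  have he0 : 0 < e := he ▸ Nat.gcd_pos_of_pos_right k (Nat.pos_of_ne_zero hn)
  rw [← (card_fixed_and_card_ker_relTr hcard he0 (he ▸ Nat.gcd_dvd_right k n)).1]
  congr 1
  ext x
  simp only [frobAddSelf, AddMonoidHom.mk'_apply, mem_filter, mem_univ, true_and,
    CharTwo.add_eq_zero, he, ← pow_pow_eq_self_iff_gcd (pow_two_pow_eq_self_of_card hcard x)]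

theorem image_frobAddSelf :
    univ.image (frobAddSelf F k) = ({a : F | relTr n e a = 0} : Finset F) := by
  have hn := ne_zero_of_card_eq_two_pow hcard
  have he0 : 0 < e := he ▸ Nat.gcd_pos_of_pos_right k (Nat.pos_of_ne_zero hn)
  have hen : e ∣ n := he ▸ Nat.gcd_dvd_right k n
  have hker := (card_fixed_and_card_ker_relTr hcard he0 hen).2
  have hsub : univ.image (frobAddSelf F k) ⊆ ({a : F | relTr n e a = 0} : Finset F) := by
    intro a ha
    obtain ⟨x, -, rfl⟩ := mem_image.mp ha
    obtain ⟨t, rfl⟩ : e ∣ k := he ▸ Nat.gcd_dvd_left k n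
    simp only [frobAddSelf, AddMonoidHom.mk'_apply, mem_filter, mem_univ, true_and, relTr.add,
      ← relTr.pow_two_pow, pow_pow_mul_eq_self (relTr.pow_two_pow_eq_self n e hen
        (pow_two_pow_eq_self_of_card hcard x)), CharTwo.add_self_eq_zero]
  refine eq_of_subset_of_card_le hsub (Nat.le_of_mul_le_mul_right ?_ (pow_pos two_pos e))
  rw [hker, pow_sub_mul_pow 2 (Nat.le_of_dvd (Nat.pos_of_ne_zero hn) hen), ← hcard,
    ← card_image_mul_card_ker (frobAddSelf F k), card_ker_frobAddSelf hcard he]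

theorem card_frobAddSelf_fiber (a : F) :
    #{x : F | x ^ 2 ^ k + x = a} = if relTr n e a = 0 then 2 ^ e else 0 := by
  change #{x | frobAddSelf F k x = a} = _
  have himage := image_frobAddSelf hcard he
  split_ifs with ha
  · rw [AddMonoidHom.card_fiber_of_mem_image _ (by simpa [himage] using ha),
      card_ker_frobAddSelf hcard he]
  · refine card_eq_zero.mpr (filter_eq_empty_iff.mpr fun x _ hx => ha ?_)
    simpa [himage, hx] using mem_image_of_mem (frobAddSelf F k) (mem_univ x)

theorem card_gold_pair_fiber (hodd : Odd (n / e)) {b t : F} (hb : b ≠ 0)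
    (ht : t ^ 2 = relTr n e b) (htfix : t ^ 2 ^ e = t) (c : F) :
    #{x : F | x ^ (2 ^ k + 1) + (x + c) ^ (2 ^ k + 1) = b ∧
        (x + 1) ^ (2 ^ k + 1) + (x + c + 1) ^ (2 ^ k + 1) = b} =
      if c = t ∧ t ≠ 0 then 2 ^ e else 0 := by
  have hk : c ^ 2 ^ k = c ↔ c ^ 2 ^ e = c :=
    he ▸ pow_pow_eq_self_iff_gcd (pow_two_pow_eq_self_of_card hcard c)
  simp only [gold_pair_iff, hk]
  by_cases hc : c ^ 2 ^ e = c ∧ c ≠ 0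
  · obtain ⟨hcfix, hc0⟩ := hc
    have hsolve : ∀ x : F, c * (x ^ 2 ^ k + x) + c ^ 2 = b ↔ x ^ 2 ^ k + x = b * c⁻¹ + c :=
      fun x => by
        have hkey : c * (b * c⁻¹ + c) = b + c ^ 2 := by field_simp
        exact CharTwo.add_eq_iff_eq_add.trans (by rw [← hkey, mul_right_inj' hc0])
    simp only [hcfix, true_and, hsolve, card_frobAddSelf_fiber hcard he,
      relTr.mul_inv_add_self_eq_zero_iff n e hodd hcfix hc0 ht]
    by_cases hct : c = t
    · subst hct; simp [hc0]
    · simp [hct]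
  · rw [card_eq_zero.mpr (filter_eq_empty_iff.mpr ?_), if_neg]
    · rintro ⟨rfl, ht0⟩
      exact hc ⟨htfix, ht0⟩
    · rintro x - ⟨hcfix, h⟩
      refine hc ⟨hcfix, ?_⟩
      rintro rfl
      exact hb (by simpa using h.symm)

end Linearized

end FiniteField

theorem gold_BCT_entry_odd_general (n k e : ℕ) (he : e = Nat.gcd k n) (hodd : Odd (n / e))
    {F : Type*} [Field F] [Fintype F] [DecidableEq F] [CharP F 2]
    (hcard : Fintype.card F = 2 ^ n)
    (b : F) (hb : b ≠ 0) :
    (relTr n e (b ^ (2 ^ (n - 1))) = 0 →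
        (Finset.univ.filter fun p : F × F =>
            p.1 ^ (2 ^ k + 1) + p.2 ^ (2 ^ k + 1) = b ∧
            (p.1 + 1) ^ (2 ^ k + 1) + (p.2 + 1) ^ (2 ^ k + 1) = b).card = 0) ∧
    (relTr n e (b ^ (2 ^ (n - 1))) ≠ 0 →
        (Finset.univ.filter fun p : F × F =>
            p.1 ^ (2 ^ k + 1) + p.2 ^ (2 ^ k + 1) = b ∧
            (p.1 + 1) ^ (2 ^ k + 1) + (p.2 + 1) ^ (2 ^ k + 1) = b).card = 2 ^ e) := by
  set t := relTr n e (b ^ 2 ^ (n - 1))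
  have hsq : t ^ 2 = relTr n e b := by
    rw [← pow_one 2, relTr.pow_two_pow, pow_one, sq_pow_two_pow_pred hcard]
  have hfix : t ^ 2 ^ e = t := relTr.pow_two_pow_eq_self n e (he ▸ Nat.gcd_dvd_right k n)
    (pow_two_pow_eq_self_of_card hcard _)
  rw [card_filter_eq_sum_card_filter_add]
  simp only [card_gold_pair_fiber hcard he hodd hb hsq hfix, ite_and, sum_ite_eq', mem_univ,
    if_true]
  exact ⟨fun h => by simp [h], fun h => by simp [h]⟩

/-- If `n/e` is odd (`e = gcd(k,n)`), the BCT entry of the Gold function `x^{2^k+1}` at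
`(1,b)` (with `c = 1`) equals `0` if `Tr_e(√b) = 0` and `2^e` if `Tr_e(√b) ≠ 0`, where
`√b = b^{2^{n−1}}`. -/
theorem gold_BCT_entry_odd (n k e : ℕ) (hn : 2 ≤ n) (hk1 : 1 ≤ k) (hkn : k < n)
    (he : e = Nat.gcd k n) (hodd : Odd (n / e))
    {F : Type*} [Field F] [Fintype F] [DecidableEq F] [CharP F 2]
    (hcard : Fintype.card F = 2 ^ n)
    (b : F) (hb : b ≠ 0) :
    (relTr n e (b ^ (2 ^ (n - 1))) = 0 →
        (Finset.univ.filter fun p : F × F =>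
            p.1 ^ (2 ^ k + 1) + p.2 ^ (2 ^ k + 1) = b ∧
            (p.1 + 1) ^ (2 ^ k + 1) + (p.2 + 1) ^ (2 ^ k + 1) = b).card = 0) ∧
    (relTr n e (b ^ (2 ^ (n - 1))) ≠ 0 →
        (Finset.univ.filter fun p : F × F =>
            p.1 ^ (2 ^ k + 1) + p.2 ^ (2 ^ k + 1) = b ∧
            (p.1 + 1) ^ (2 ^ k + 1) + (p.2 + 1) ^ (2 ^ k + 1) = b).card = 2 ^ e) :=
  gold_BCT_entry_odd_general n k e he hodd hcard b hb
end

section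
/- Let n ≥ 2 and 1 ≤ k < n with e = gcd(k, n), and suppose n/e is odd. Then the boomerang uniformity of the Gold function F(x) = x^{2^k+1} over F_q equals 2^e; that is, for all a, b ∈ F_q^* the number of pairs (x, y) ∈ F_q × F_q with x^{2^k+1} + y^{2^k+1} = b and (x+a)^{2^k+1} + (y+a)^{2^k+1} = b is at most 2^e, and this value 2^e is attained for some a, b ∈ F_q^*. -/
/-!
Let `K = {t | t ^ 2 ^ k = t}`, the subfield with `2 ^ e` elements, and
`L_a x = goldLinear k a x = a x ^ 2 ^ k + a ^ 2 ^ k x`, so that `f (x + a) = f x + L_a x + f a`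
for the Gold function `f`. The map `L_a` is `K`-linear with kernel `a K`, and `(x, y)` is counted
at `(a, b)` iff `y = x + a t` with `t ∈ K` and `t L_a x + t ^ 2 f a = b`. When `n / e` is odd,
`f a` is not a value of `L_a`: `w ^ 2 ^ k = w + 1` would give `w = w ^ 2 ^ (k n / e) = w + n / e`.
This forces the same `t` for all counted pairs, which then lie in one coset of `a K`; hence there
are at most `2 ^ e` of them, and for `a = b = 1` the pairs `(x, x + 1)`, `x ∈ K`, attain the bound.
-/

open Finset Polynomial

theorem pow_pow_eq_self_iff_gcd_s14 {M : Type*} [Monoid M] {p n : ℕ} {t : M} (ht : t ^ p ^ n = t)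
    (k : ℕ) : t ^ p ^ k = t ↔ t ^ p ^ Nat.gcd k n = t := by
  have hper (m : ℕ) : Function.IsPeriodicPt (· ^ p) m t ↔ t ^ p ^ m = t := by
    rw [Function.IsPeriodicPt, Function.IsFixedPt, pow_iterate]
  rw [← hper] at ht
  rw [← hper, ← hper]
  refine ⟨fun hk => hk.gcd ht, fun hgcd => ?_⟩
  obtain ⟨c, hc⟩ := Nat.gcd_dvd_left k n
  exact hc ▸ hgcd.mul_const c

theorem pow_pow_mul_eq_add_natCast {R : Type*} [CommRing R] {p : ℕ} [Fact p.Prime] [CharP R p]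
    {k : ℕ} {w : R} (hw : w ^ p ^ k = w + 1) (m : ℕ) : w ^ p ^ (k * m) = w + m := by
  induction m with
  | zero => simp
  | succ m ih =>
    have hm : (m : R) ^ p ^ k = m := map_natCast (iterateFrobenius R p k) m
    rw [mul_add_one, pow_add, pow_mul, ih, add_pow_char_pow, hw, hm]
    push_cast
    ring

section FiniteField

variable {F : Type*} [Field F] [Fintype F] {p n : ℕ} [hp : Fact p.Prime] [CharP F p]

theorem card_filter_pow_pow_eq_self [DecidableEq F] {e : ℕ} (hcard : Fintype.card F = p ^ n)
    (hen : e ∣ n) : #{t : F | t ^ p ^ e = t} = p ^ e := by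
  have hn : n ≠ 0 := by
    rintro rfl
    exact Fintype.one_lt_card.ne' (by simpa using hcard)
  have he : e ≠ 0 := by
    rintro rfl
    exact hn (zero_dvd_iff.mp hen)
  apply le_antisymm
  · have hX := FiniteField.X_pow_card_pow_sub_X_ne_zero F he hp.out.one_lt
    calc #{t : F | t ^ p ^ e = t} ≤ #(X ^ p ^ e - X : F[X]).roots.toFinset := by
          refine card_le_card fun t ht => ?_
          rw [Multiset.mem_toFinset, mem_roots hX]
          simp [(mem_filter.1 ht).2]
      _ ≤ Multiset.card (X ^ p ^ e - X : F[X]).roots := Multiset.toFinset_card_le _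
      _ ≤ (X ^ p ^ e - X : F[X]).natDegree := card_roots' _
      _ = p ^ e := FiniteField.X_pow_card_pow_sub_X_natDegree_eq F he hp.out.one_lt
  · let := ZMod.algebra F p
    have hfin : Module.finrank (ZMod p) F = n :=
      Nat.pow_right_injective hp.out.two_le <| by
        simp only [FiniteField.pow_finrank_eq_card, hcard]
    obtain ⟨φ⟩ := FiniteField.nonempty_algHom_of_finrank_dvd (F := ZMod p) (K := GaloisField p e)
      (L := F) (by rw [GaloisField.finrank p he, hfin]; exact hen)
    have := Fintype.ofFinite (GaloisField p e)
    have hGcard : Fintype.card (GaloisField p e) = p ^ e := by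
      rw [Fintype.card_eq_nat_card, GaloisField.card p e he]
    have hφ : Function.Injective φ := φ.toRingHom.injective
    calc p ^ e = #(univ.image φ) := by rw [card_image_of_injective _ hφ, card_univ, hGcard]
      _ ≤ #{t : F | t ^ p ^ e = t} := card_le_card fun t ht => by
          obtain ⟨x, -, rfl⟩ := mem_image.mp ht
          rw [mem_filter, ← map_pow, ← hGcard, FiniteField.pow_card]
          exact ⟨mem_univ _, rfl⟩

theorem pow_pow_ne_add_one {k m : ℕ} (hcard : Fintype.card F = p ^ n) (hm : ¬p ∣ m)
    (hkm : n ∣ k * m) (w : F) : w ^ p ^ k ≠ w + 1 := by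
  intro hw
  have h := pow_pow_mul_eq_add_natCast hw m
  obtain ⟨c, hc⟩ := hkm
  rw [hc, pow_mul, ← hcard, FiniteField.pow_card_pow, left_eq_add,
    CharP.cast_eq_zero_iff F p] at h
  exact hm h

end FiniteField

section Gold

variable {F : Type*} [Field F] [CharP F 2] (k : ℕ)

def goldLinear (a : F) : F →+ F where
  toFun x := a * x ^ 2 ^ k + a ^ 2 ^ k * x
  map_zero' := by simp
  map_add' x y := by
    simp only [add_pow_char_pow]
    ring

theorem goldLinear_apply (a x : F) : goldLinear k a x = a * x ^ 2 ^ k + a ^ 2 ^ k * x := rfl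

theorem add_pow_two_pow_add_one_s14 (x y : F) :
    (x + y) ^ (2 ^ k + 1) = x ^ (2 ^ k + 1) + goldLinear k y x + y ^ (2 ^ k + 1) := by
  rw [goldLinear_apply, pow_succ, pow_succ, pow_succ, add_pow_char_pow]
  ring

theorem goldLinear_mul_of_pow_eq {t : F} (ht : t ^ 2 ^ k = t) (a x : F) :
    goldLinear k a (t * x) = t * goldLinear k a x := by
  rw [goldLinear_apply, goldLinear_apply, mul_pow, ht]
  ring

theorem goldLinear_self_mul (a w : F) :
    goldLinear k a (a * w) = a ^ (2 ^ k + 1) * (w ^ 2 ^ k + w) := by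
  rw [goldLinear_apply, mul_pow]
  ring

theorem goldLinear_self_mul_eq_zero_iff {a : F} (ha : a ≠ 0) (w : F) :
    goldLinear k a (a * w) = 0 ↔ w ^ 2 ^ k = w := by
  rw [goldLinear_self_mul, mul_eq_zero_iff_left (pow_ne_zero _ ha), CharTwo.add_eq_zero]

theorem goldLinear_ne_pow_succ (hk : ∀ w : F, w ^ 2 ^ k ≠ w + 1) {a : F} (ha : a ≠ 0) (v : F) :
    goldLinear k a v ≠ a ^ (2 ^ k + 1) := by
  rw [← mul_div_cancel₀ v ha, goldLinear_self_mul, Ne, mul_eq_left₀ (pow_ne_zero _ ha),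
    CharTwo.add_eq_iff_eq_add, add_comm 1]
  exact hk _

theorem add_mul_pow_two_pow_add_one {t : F} (ht : t ^ 2 ^ k = t) (a x : F) :
    (x + a * t) ^ (2 ^ k + 1) =
      x ^ (2 ^ k + 1) + (t * goldLinear k a x + t ^ 2 * a ^ (2 ^ k + 1)) := by
  rw [add_pow_two_pow_add_one_s14, goldLinear_apply, goldLinear_apply, mul_pow, mul_pow, pow_succ t,
    ht]
  ring

theorem add_pow_two_pow_add_one_add (a x y : F) :
    (x + a) ^ (2 ^ k + 1) + (y + a) ^ (2 ^ k + 1) =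
      x ^ (2 ^ k + 1) + y ^ (2 ^ k + 1) + goldLinear k a (x + y) := by
  rw [add_pow_two_pow_add_one_s14, add_pow_two_pow_add_one_s14, map_add]
  linear_combination a ^ (2 ^ k + 1) * CharTwo.two_eq_zero (R := F)

/-- The parameter `t` of `mem_goldBCT_iff` is the same for all pairs: each `b t⁻¹ ^ 2 - A` is a
value of `L_a`, and the values form a `K`-subspace, so two different `t` would make `A` a value. -/
theorem eq_of_goldLinear_ne_pow_succ {a b : F} (hA : ∀ v, goldLinear k a v ≠ a ^ (2 ^ k + 1))
    {t t' x x' : F} (ht : t ^ 2 ^ k = t) (ht' : t' ^ 2 ^ k = t') (h0 : t ≠ 0) (h0' : t' ≠ 0)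
    (hx : t * goldLinear k a x + t ^ 2 * a ^ (2 ^ k + 1) = b)
    (hx' : t' * goldLinear k a x' + t' ^ 2 * a ^ (2 ^ k + 1) = b) : t = t' := by
  set A := a ^ (2 ^ k + 1)
  set R := (goldLinear k a).range
  have hmul {s z : F} (hs : s ^ 2 ^ k = s) (hz : z ∈ R) : s * z ∈ R := by
    obtain ⟨v, rfl⟩ := hz
    exact ⟨s * v, goldLinear_mul_of_pow_eq k hs a v⟩
  have hinv {s : F} (hs : s ^ 2 ^ k = s) : s⁻¹ ^ 2 ^ k = s⁻¹ := by rw [inv_pow, hs]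
  have hsq {s : F} (hs : s ^ 2 ^ k = s) : (s ^ 2) ^ 2 ^ k = s ^ 2 := by rw [pow_right_comm, hs]
  have hmem {t x : F} (h0 : t ≠ 0) (ht : t ^ 2 ^ k = t)
      (hx : t * goldLinear k a x + t ^ 2 * A = b) :
      b * t⁻¹ ^ 2 - A ∈ R :=
    ⟨t⁻¹ * x, by rw [goldLinear_mul_of_pow_eq k (hinv ht), ← hx]; field_simp; ring⟩
  by_contra hne
  set c := t⁻¹ - t'⁻¹
  have hc : c ≠ 0 := sub_ne_zero.2 (inv_injective.ne hne)
  have hcK : c ^ 2 ^ k = c := by rw [sub_pow_char_pow, hinv ht, hinv ht']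
  have hbc : c ^ 2 * b ∈ R := by
    convert sub_mem (hmem h0 ht hx) (hmem h0' ht' hx') using 1
    rw [sub_pow_char]
    ring
  have hb : b ∈ R := by
    convert hmul (hinv (hsq hcK)) hbc using 1
    field_simp
  obtain ⟨v, hv⟩ : A ∈ R := by
    convert sub_mem (hmul (hsq (hinv ht)) hb) (hmem h0 ht hx) using 1
    ring
  exact hA v hv

variable [Fintype F] [DecidableEq F]

def goldBCT (a b : F) : Finset (F × F) :=
  {p | p.1 ^ (2 ^ k + 1) + p.2 ^ (2 ^ k + 1) = b ∧
    (p.1 + a) ^ (2 ^ k + 1) + (p.2 + a) ^ (2 ^ k + 1) = b}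

theorem mem_goldBCT_iff {a : F} (ha : a ≠ 0) (b x y : F) :
    (x, y) ∈ goldBCT k a b ↔ ∃ t : F, t ^ 2 ^ k = t ∧ y = x + a * t ∧
      t * goldLinear k a x + t ^ 2 * a ^ (2 ^ k + 1) = b := by
  simp only [goldBCT, mem_filter, mem_univ, true_and, add_pow_two_pow_add_one_add]
  constructor
  · rintro ⟨hb, hL⟩
    rw [hb, add_eq_left, ← mul_div_cancel₀ (x + y) ha,
      goldLinear_self_mul_eq_zero_iff k ha] at hL
    refine ⟨(x + y) / a, hL, by rw [mul_div_cancel₀ _ ha, CharTwo.add_cancel_left], ?_⟩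
    rwa [← CharTwo.add_cancel_left (x ^ (2 ^ k + 1)) (_ + _),
      ← add_mul_pow_two_pow_add_one k hL, mul_div_cancel₀ _ ha, CharTwo.add_cancel_left]
  · rintro ⟨t, ht, rfl, hb⟩
    rw [add_mul_pow_two_pow_add_one k ht, CharTwo.add_cancel_left, CharTwo.add_cancel_left,
      (goldLinear_self_mul_eq_zero_iff k ha t).2 ht, add_zero]
    exact ⟨hb, hb⟩

theorem card_goldBCT_le {a b : F} (hA : ∀ v, goldLinear k a v ≠ a ^ (2 ^ k + 1)) (ha : a ≠ 0)
    (hb : b ≠ 0) : #(goldBCT k a b) ≤ #{t : F | t ^ 2 ^ k = t} := by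
  obtain hempty | ⟨⟨x₀, y₀⟩, h₀⟩ := (goldBCT k a b).eq_empty_or_nonempty
  · simp [hempty]
  obtain ⟨t₀, ht₀, rfl, hx₀⟩ := (mem_goldBCT_iff k ha b x₀ y₀).1 h₀
  have h0 : ∀ {t x : F}, t * goldLinear k a x + t ^ 2 * a ^ (2 ^ k + 1) = b → t ≠ 0 := by
    rintro t x h rfl
    exact hb (by simpa using h.symm)
  calc #(goldBCT k a b)
      ≤ #(image (fun τ => (x₀ + a * τ, x₀ + a * t₀ + a * τ)) {t | t ^ 2 ^ k = t}) := by
        refine card_le_card fun ⟨x, y⟩ hxy => ?_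
        obtain ⟨t, ht, rfl, hx⟩ := (mem_goldBCT_iff k ha b x y).1 hxy
        obtain rfl := eq_of_goldLinear_ne_pow_succ k hA ht ht₀ (h0 hx) (h0 hx₀) hx hx₀
        have hL : goldLinear k a (a * ((x - x₀) / a)) = 0 := by
          rw [mul_div_cancel₀ _ ha, map_sub, sub_eq_zero]
          exact mul_left_cancel₀ (h0 hx) (add_right_cancel (hx.trans hx₀.symm))
        refine mem_image.2 ⟨(x - x₀) / a, ?_, ?_⟩
        · simpa using (goldLinear_self_mul_eq_zero_iff k ha _).1 hL
        · rw [mul_div_cancel₀ _ ha]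
          ext <;> ring
    _ ≤ #{t : F | t ^ 2 ^ k = t} := card_image_le

theorem card_le_card_goldBCT_one_one : #{t : F | t ^ 2 ^ k = t} ≤ #(goldBCT k (1 : F) 1) := by
  rw [← card_image_of_injective _ fun x y (h : (x, x + 1) = (y, y + 1)) => congrArg Prod.fst h]
  refine card_le_card fun p hp => ?_
  obtain ⟨x, hx, rfl⟩ := mem_image.1 hp
  rw [mem_goldBCT_iff k one_ne_zero]
  refine ⟨1, one_pow _, by rw [mul_one], ?_⟩
  rw [goldLinear_apply, (mem_filter.1 hx).2]
  simp [CharTwo.add_self_eq_zero]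

end Gold

theorem gold_boomerang_uniformity_odd_general (n k e : ℕ)
    (he : e = Nat.gcd k n) (hodd : Odd (n / e))
    {F : Type*} [Field F] [Fintype F] [DecidableEq F] [CharP F 2]
    (hcard : Fintype.card F = 2 ^ n) :
    (∀ a b : F, a ≠ 0 → b ≠ 0 →
        (Finset.univ.filter fun p : F × F =>
            p.1 ^ (2 ^ k + 1) + p.2 ^ (2 ^ k + 1) = b ∧
            (p.1 + a) ^ (2 ^ k + 1) + (p.2 + a) ^ (2 ^ k + 1) = b).card ≤ 2 ^ e) ∧
    (∃ a b : F, a ≠ 0 ∧ b ≠ 0 ∧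
        (Finset.univ.filter fun p : F × F =>
            p.1 ^ (2 ^ k + 1) + p.2 ^ (2 ^ k + 1) = b ∧
            (p.1 + a) ^ (2 ^ k + 1) + (p.2 + a) ^ (2 ^ k + 1) = b).card = 2 ^ e) := by
  have hen : e ∣ n := he ▸ Nat.gcd_dvd_right k n
  have hK : #{t : F | t ^ 2 ^ k = t} = 2 ^ e := by
    have hF (t : F) : t ^ 2 ^ n = t := by rw [← hcard, FiniteField.pow_card]
    simp_rw [pow_pow_eq_self_iff_gcd_s14 (hF _) k, ← he]
    exact card_filter_pow_pow_eq_self hcard hen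
  have hdvd : n ∣ k * (n / e) := by
    obtain ⟨c, rfl⟩ := he ▸ Nat.gcd_dvd_left k n
    exact ⟨c, by rw [mul_right_comm, Nat.mul_div_cancel' hen]⟩
  have hA {a : F} (ha : a ≠ 0) (v : F) : goldLinear k a v ≠ a ^ (2 ^ k + 1) :=
    goldLinear_ne_pow_succ k (pow_pow_ne_add_one hcard hodd.not_two_dvd_nat hdvd) ha v
  have hbound {a b : F} (ha : a ≠ 0) (hb : b ≠ 0) : #(goldBCT k a b) ≤ 2 ^ e :=
    hK ▸ card_goldBCT_le k (hA ha) ha hb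
  exact ⟨fun a b => hbound, 1, 1, one_ne_zero, one_ne_zero,
    (hbound one_ne_zero one_ne_zero).antisymm (hK ▸ card_le_card_goldBCT_one_one k)⟩

/-- If `n/e` is odd (`e = gcd(k,n)`), the boomerang uniformity of the Gold function
`x^{2^k+1}` over the field `F` with `2^n` elements equals `2^e`: every BCT entry at
`(a,b)` with `a, b ≠ 0` is at most `2^e`, and this bound is attained. -/
theorem gold_boomerang_uniformity_odd (n k e : ℕ) (hn : 2 ≤ n) (hk1 : 1 ≤ k) (hkn : k < n)
    (he : e = Nat.gcd k n) (hodd : Odd (n / e))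
    {F : Type*} [Field F] [Fintype F] [DecidableEq F] [CharP F 2]
    (hcard : Fintype.card F = 2 ^ n) :
    (∀ a b : F, a ≠ 0 → b ≠ 0 →
        (Finset.univ.filter fun p : F × F =>
            p.1 ^ (2 ^ k + 1) + p.2 ^ (2 ^ k + 1) = b ∧
            (p.1 + a) ^ (2 ^ k + 1) + (p.2 + a) ^ (2 ^ k + 1) = b).card ≤ 2 ^ e) ∧
    (∃ a b : F, a ≠ 0 ∧ b ≠ 0 ∧
        (Finset.univ.filter fun p : F × F =>
            p.1 ^ (2 ^ k + 1) + p.2 ^ (2 ^ k + 1) = b ∧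
            (p.1 + a) ^ (2 ^ k + 1) + (p.2 + a) ^ (2 ^ k + 1) = b).card = 2 ^ e) :=
  gold_boomerang_uniformity_odd_general n k e he hodd hcard
end

section
/- Let F : F_q → F_q be any function on the finite field F_q with q = 2^n elements, and let a, b ∈ F_q and c ∈ F_q^*. Then the number of pairs (x, y) ∈ F_q × F_q satisfying F(x) + c·F(y) = b and F(x+a) + c^{−1}·F(y+a) = b equals the number of pairs (x, y) ∈ F_q × F_q satisfying F(x) + c^{−1}·F(y) = b and F(x+a) + c·F(y+a) = b. In other words, in characteristic 2 the c-Boomerang Connectivity Table entry at (a, b) coincides with the c^{−1}-Boomerang Connectivity Table entry at (a, b). -/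
theorem CharTwo.card_filter_and_translate_comm {R : Type*} [Ring R] [CharP R 2] [Fintype R]
    (P Q : R → R → Prop) [DecidableRel P] [DecidableRel Q] (a : R) :
    (Finset.univ.filter fun p : R × R => P p.1 p.2 ∧ Q (p.1 + a) (p.2 + a)).card =
    (Finset.univ.filter fun p : R × R => Q p.1 p.2 ∧ P (p.1 + a) (p.2 + a)).card := by
  refine Finset.card_equiv (Equiv.addRight (a, a)) fun p => ?_
  simp only [Finset.mem_filter, Finset.mem_univ, true_and, Equiv.coe_addRight, Prod.fst_add,
    Prod.snd_add, CharTwo.add_cancel_right]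
  exact and_comm

theorem cBCT_eq_cinvBCT_general
    {K : Type*} [Field K] [Fintype K] [DecidableEq K] [CharP K 2]
    (F : K → K) (a b : K) (c : K) :
    (Finset.univ.filter fun p : K × K =>
        F p.1 + c * F p.2 = b ∧ F (p.1 + a) + c⁻¹ * F (p.2 + a) = b).card =
    (Finset.univ.filter fun p : K × K =>
        F p.1 + c⁻¹ * F p.2 = b ∧ F (p.1 + a) + c * F (p.2 + a) = b).card :=
  CharTwo.card_filter_and_translate_comm (fun x y => F x + c * F y = b)
    (fun x y => F x + c⁻¹ * F y = b) a

/-- In characteristic 2, the `c`-BCT entry of any function `F` at `(a,b)` coincides with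
the `c⁻¹`-BCT entry at `(a,b)`. -/
theorem cBCT_eq_cinvBCT (n : ℕ)
    {K : Type*} [Field K] [Fintype K] [DecidableEq K] [CharP K 2]
    (hcard : Fintype.card K = 2 ^ n)
    (F : K → K) (a b : K) (c : K) (hc : c ≠ 0) :
    (Finset.univ.filter fun p : K × K =>
        F p.1 + c * F p.2 = b ∧ F (p.1 + a) + c⁻¹ * F (p.2 + a) = b).card =
    (Finset.univ.filter fun p : K × K =>
        F p.1 + c⁻¹ * F p.2 = b ∧ F (p.1 + a) + c * F (p.2 + a) = b).card :=
  cBCT_eq_cinvBCT_general F a b c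
end
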